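/- arXiv:2412.16709 — 6 statements merged into one kernel-verified Lean document; each statement's English description precedes it below -/
import Mathlib

section
/- Let q and n be positive integers and let C₁, C₂ be linear codes in (ℤ/qℤ)ⁿ with equal weight distributions, i.e. there exists a bijection f : C₁ → C₂ such that for every codeword c ∈ C₁ there exist a permutation σ of {1,…,n} and signs ε₁,…,εₙ ∈ {+1,−1} with f(c)ᵢ = εᵢ · c_{σ(i)} (computed in ℤ/qℤ) for all i. Then the full-rank lattices π_q⁻¹(C₁) and π_q⁻¹(C₂) are isospectral: for every real t ≥ 0, the sets {x ∈ π_q⁻¹(C₁) : ‖x‖² = t} and {x ∈ π_q⁻¹(C₂) : ‖x‖² = t} have the same finite cardinality. -/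
/-- If two linear codes `C₁, C₂ ≤ (ℤ/qℤ)ⁿ` have equal weight distributions
(a bijection `f : C₁ → C₂` such that each `f c` equals `c` up to a permutation of the
coordinates and signs), then the lattices `π_q⁻¹(C₁)` and `π_q⁻¹(C₂)` are isospectral:
for every real `t ≥ 0`, the sets of lattice vectors of squared Euclidean norm `t`
are finite and have the same cardinality. -/
theorem stmt_3 (q n : ℕ) (hq : 0 < q) (hn : 0 < n)
    (C₁ C₂ : AddSubgroup (Fin n → ZMod q))
    (f : (Fin n → ZMod q) → (Fin n → ZMod q))
    (hf : Set.BijOn f (C₁ : Set (Fin n → ZMod q)) (C₂ : Set (Fin n → ZMod q)))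
    (hw : ∀ c ∈ C₁, ∃ σ : Equiv.Perm (Fin n), ∃ ε : Fin n → ZMod q,
      (∀ i, ε i = 1 ∨ ε i = -1) ∧ ∀ i, f c i = ε i * c (σ i)) :
    ∀ t : ℝ, 0 ≤ t →
      {x : Fin n → ℤ | (fun i => ((x i : ZMod q))) ∈ C₁ ∧ (∑ i, ((x i : ℝ)) ^ 2) = t}.Finite ∧
      {x : Fin n → ℤ | (fun i => ((x i : ZMod q))) ∈ C₂ ∧ (∑ i, ((x i : ℝ)) ^ 2) = t}.Finite ∧
      {x : Fin n → ℤ | (fun i => ((x i : ZMod q))) ∈ C₁ ∧ (∑ i, ((x i : ℝ)) ^ 2) = t}.ncard =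
      {x : Fin n → ℤ | (fun i => ((x i : ZMod q))) ∈ C₂ ∧ (∑ i, ((x i : ℝ)) ^ 2) = t}.ncard := by
  classical
  intro t ht
  -- abbreviation for the projection
  set π : (Fin n → ℤ) → (Fin n → ZMod q) := fun x i => ((x i : ZMod q)) with hπ
  -- finiteness of shells
  have habs : ∀ a : ℤ, |a| ≤ a ^ 2 := by
    intro a
    rcases le_or_gt 1 |a| with h | h
    · calc |a| = |a| * 1 := (mul_one _).symm
        _ ≤ |a| * |a| := by nlinarith
        _ = a ^ 2 := by rw [abs_mul_abs_self]; ring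
    · have : a = 0 := Int.abs_lt_one_iff.mp h
      simp [this]
  have hfin : ∀ (C : AddSubgroup (Fin n → ZMod q)),
      {x : Fin n → ℤ | (fun i => ((x i : ZMod q))) ∈ C ∧ (∑ i, ((x i : ℝ)) ^ 2) = t}.Finite := by
    intro C
    apply Set.Finite.subset (Set.Finite.pi (fun i : Fin n => Set.finite_Icc (-(⌈t⌉)) ⌈t⌉))
    intro x hx
    simp only [Set.mem_pi, Set.mem_univ, forall_true_left, Set.mem_Icc]
    intro i
    have h1 : ((x i : ℝ)) ^ 2 ≤ t := by
      rw [← hx.2]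
      exact Finset.single_le_sum (f := fun j => ((x j : ℝ)) ^ 2)
        (fun j _ => sq_nonneg _) (Finset.mem_univ i)
    have h2 : ((x i) ^ 2 : ℤ) ≤ ⌈t⌉ := by
      have := h1.trans (Int.le_ceil t)
      exact_mod_cast this
    have h3 : |x i| ≤ ⌈t⌉ := (habs _).trans h2
    exact abs_le.mp h3
  refine ⟨hfin C₁, hfin C₂, ?_⟩
  -- extract integer signs and permutations
  have key : ∀ c : Fin n → ZMod q, ∃ σ : Equiv.Perm (Fin n), ∃ s : Fin n → ℤ,
      (∀ i, s i = 1 ∨ s i = -1) ∧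
      (c ∈ C₁ → ∀ i, f c i = ((s i : ℤ) : ZMod q) * c (σ i)) := by
    intro c
    by_cases hc : c ∈ C₁
    · obtain ⟨σ, ε, hε, hfc⟩ := hw c hc
      refine ⟨σ, fun i => if ε i = 1 then 1 else -1, fun i => by by_cases h : ε i = 1 <;> simp [h], fun _ i => ?_⟩
      rw [hfc i]
      congr 1
      by_cases h1 : ε i = 1
      · simp [h1]
      · rcases hε i with h | h
        · exact absurd h h1
        · rw [show (fun i => if ε i = 1 then (1 : ℤ) else -1) i = -1 from if_neg h1, h]
          simp
    · exact ⟨1, fun _ => 1, fun i => Or.inl rfl, fun h => absurd h hc⟩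
  choose σ s hs hfc using key
  -- sign squares
  have hs2 : ∀ c i, (s c i) * (s c i) = 1 := by
    intro c i
    rcases hs c i with h | h <;> rw [h] <;> ring
  -- sum invariance under permutation with signs
  have hsum : ∀ (c : Fin n → ZMod q) (x : Fin n → ℤ),
      (∑ i, (((s c i * x (σ c i) : ℤ) : ℝ)) ^ 2) = ∑ i, ((x i : ℝ)) ^ 2 := by
    intro c x
    have hterm : ∀ i, (((s c i * x (σ c i) : ℤ) : ℝ)) ^ 2 = ((x (σ c i) : ℝ)) ^ 2 := by
      intro i
      rcases hs c i with h | h <;> rw [h] <;> push_cast <;> ring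
    rw [Finset.sum_congr rfl (fun i _ => hterm i)]
    exact Equiv.sum_comp (σ c) (fun i => ((x i : ℝ)) ^ 2)
  -- the map
  set g : (Fin n → ℤ) → (Fin n → ℤ) := fun x i => s (π x) i * x (σ (π x) i) with hg
  have hπg : ∀ x, π x ∈ C₁ → π (g x) = f (π x) := by
    intro x hx
    funext i
    have := hfc (π x) hx i
    simp only [hπ, hg]
    push_cast
    rw [this]
  -- BijOn
  set A := {x : Fin n → ℤ | (fun i => ((x i : ZMod q))) ∈ C₁ ∧ (∑ i, ((x i : ℝ)) ^ 2) = t}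
    with hA
  set B := {x : Fin n → ℤ | (fun i => ((x i : ZMod q))) ∈ C₂ ∧ (∑ i, ((x i : ℝ)) ^ 2) = t}
    with hB
  have hmemA : ∀ x, x ∈ A ↔ (π x ∈ C₁ ∧ (∑ i, ((x i : ℝ)) ^ 2) = t) := fun x => Iff.rfl
  have hmemB : ∀ x, x ∈ B ↔ (π x ∈ C₂ ∧ (∑ i, ((x i : ℝ)) ^ 2) = t) := fun x => Iff.rfl
  have hbij : Set.BijOn g A B := by
    refine ⟨?_, ?_, ?_⟩
    · -- MapsTo
      intro x hx
      rw [hmemA] at hx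
      rw [hmemB]
      constructor
      · rw [hπg x hx.1]
        exact hf.mapsTo hx.1
      · rw [← hx.2]
        exact hsum (π x) x
    · -- InjOn
      intro x hx y hy hxy
      rw [hmemA] at hx hy
      have hπxy : π x = π y := by
        apply hf.injOn hx.1 hy.1
        rw [← hπg x hx.1, ← hπg y hy.1, hxy]
      have hcomp : ∀ i, x (σ (π x) i) = y (σ (π x) i) := by
        intro i
        have h1 : s (π x) i * x (σ (π x) i) = s (π x) i * y (σ (π x) i) := by
          have := congrFun hxy i
          simp only [hg] at this
          rw [this, hπxy]
        have hne : s (π x) i ≠ 0 := by rcases hs (π x) i with h | h <;> simp [h]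
        exact mul_left_cancel₀ hne h1
      funext j
      have := hcomp ((σ (π x)).symm j)
      simpa using this
    · -- SurjOn
      intro y hy
      rw [hmemB] at hy
      obtain ⟨c, hc, hfc'⟩ := hf.surjOn hy.1
      refine ⟨fun j => s c ((σ c).symm j) * y ((σ c).symm j), ?_, ?_⟩
      · -- the preimage lies in A
        have hπx : π (fun j => s c ((σ c).symm j) * y ((σ c).symm j)) = c := by
          funext j
          have h1 : f c (((σ c).symm j)) = ((s c ((σ c).symm j) : ℤ) : ZMod q) * c j := by
            have := hfc c hc ((σ c).symm j)
            rw [this]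
            congr 1
            simp
          have h2 : π y ((σ c).symm j) = ((s c ((σ c).symm j) : ℤ) : ZMod q) * c j := by
            rw [← h1, hfc']
          have hsq : ((s c ((σ c).symm j) : ℤ) : ZMod q) *
              ((s c ((σ c).symm j) : ℤ) : ZMod q) = 1 := by
            rw [← Int.cast_mul, hs2]
            simp
          simp only [hπ]
          push_cast
          calc ((s c ((σ c).symm j) : ℤ) : ZMod q) * ((y ((σ c).symm j) : ℤ) : ZMod q)
              = ((s c ((σ c).symm j) : ℤ) : ZMod q) * π y ((σ c).symm j) := rfl
            _ = ((s c ((σ c).symm j) : ℤ) : ZMod q) *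
                (((s c ((σ c).symm j) : ℤ) : ZMod q) * c j) := by rw [h2]
            _ = c j := by rw [← mul_assoc, hsq, one_mul]
        rw [hmemA]
        refine ⟨by rw [hπx]; exact hc, ?_⟩
        · -- norm: reindex by (σ c).symm
          rw [← hy.2]
          have := hsum c (fun j => s c ((σ c).symm j) * y ((σ c).symm j))
          -- direct computation instead
          have hterm : ∀ j, (((s c ((σ c).symm j) * y ((σ c).symm j) : ℤ) : ℝ)) ^ 2
              = ((y ((σ c).symm j) : ℝ)) ^ 2 := by
            intro j
            rcases hs c ((σ c).symm j) with h | h <;> rw [h] <;> push_cast <;> ring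
          rw [Finset.sum_congr rfl (fun j _ => hterm j)]
          exact Equiv.sum_comp (σ c).symm (fun i => ((y i : ℝ)) ^ 2)
      · -- g of it is y
        have hπx : π (fun j => s c ((σ c).symm j) * y ((σ c).symm j)) = c := by
          funext j
          have h1 : f c (((σ c).symm j)) = ((s c ((σ c).symm j) : ℤ) : ZMod q) * c j := by
            have := hfc c hc ((σ c).symm j)
            rw [this]
            congr 1
            simp
          have h2 : π y ((σ c).symm j) = ((s c ((σ c).symm j) : ℤ) : ZMod q) * c j := by
            rw [← h1, hfc']
          have hsq : ((s c ((σ c).symm j) : ℤ) : ZMod q) *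
              ((s c ((σ c).symm j) : ℤ) : ZMod q) = 1 := by
            rw [← Int.cast_mul, hs2]
            simp
          simp only [hπ]
          push_cast
          calc ((s c ((σ c).symm j) : ℤ) : ZMod q) * ((y ((σ c).symm j) : ℤ) : ZMod q)
              = ((s c ((σ c).symm j) : ℤ) : ZMod q) * π y ((σ c).symm j) := rfl
            _ = ((s c ((σ c).symm j) : ℤ) : ZMod q) *
                (((s c ((σ c).symm j) : ℤ) : ZMod q) * c j) := by rw [h2]
            _ = c j := by rw [← mul_assoc, hsq, one_mul]
        funext i
        simp only [hg, hπx]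
        rw [Equiv.symm_apply_apply]
        calc s c i * (s c i * y i) = (s c i * s c i) * y i := by ring
          _ = y i := by rw [hs2]; ring
  calc A.ncard = (g '' A).ncard := (Set.ncard_image_of_injOn hbij.injOn).symm
    _ = B.ncard := by rw [hbij.image_eq]
end

section
/- Let A₁, A₂, A₃ be the 6×6 integer matrices with rows A₁ = [[1,0,0,0,0,0],[0,1,0,0,0,0],[0,0,1,0,0,0],[1,1,0,5,0,0],[2,0,1,0,5,0],[1,2,1,0,0,5]], A₂ = [[1,0,0,0,0,0],[0,1,0,0,0,0],[0,0,1,0,0,0],[2,1,0,5,0,0],[0,1,1,0,5,0],[3,2,1,0,0,5]], A₃ = [[1,0,0,0,0,0],[0,1,0,0,0,0],[0,0,1,0,0,0],[2,1,0,5,0,0],[0,1,1,0,5,0],[2,3,1,0,0,5]], and let Qᵢ = AᵢᵀAᵢ. Then for every integer t ≥ 0 and all i, j ∈ {1,2,3}, the representation numbers satisfy R(Qᵢ,t) = R(Qⱼ,t); equivalently, the lattices Lᵢ = Aᵢℤ⁶ are mutually isospectral. -/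
/-!
Each `Aᵢ` has the block form `[[I, 0], [Bᵢ, 5I]]`, so `Aᵢℤ⁶` is the Construction A lattice of
the code `Cᵢ = {(p, Bᵢp) : p ∈ 𝔽₅³}`: the vectors of `ℤ⁶` whose reduction mod 5 lies in `Cᵢ`.
Sorting the lattice vectors of norm `t` by their residue `c ∈ Cᵢ`, the number in a class is
unchanged by signed permutations of the coordinates, so it only depends on the multiset of the
`|c_k|` (residues read in `{0, 1, 2}`). The three codes have the same multiset of these multisets
(the same symmetrized weight enumerator, a finite computation), so the residue classes of the
three lattices can be matched class by class.
-/

open Matrix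

/-- the three `6 × 6` basis matrices `A₁, A₂, A₃` of the lattice triple. -/
def paperA : Fin 3 → Matrix (Fin 6) (Fin 6) ℤ :=
  ![!![1,0,0,0,0,0; 0,1,0,0,0,0; 0,0,1,0,0,0; 1,1,0,5,0,0; 2,0,1,0,5,0; 1,2,1,0,0,5],
    !![1,0,0,0,0,0; 0,1,0,0,0,0; 0,0,1,0,0,0; 2,1,0,5,0,0; 0,1,1,0,5,0; 3,2,1,0,0,5],
    !![1,0,0,0,0,0; 0,1,0,0,0,0; 0,0,1,0,0,0; 2,1,0,5,0,0; 0,1,1,0,5,0; 2,3,1,0,0,5]]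

open Finset

theorem dotProduct_transpose_mul_mulVec_self {n R : Type*} [Fintype n] [CommRing R]
    (A : Matrix n n R) (x : n → R) : x ⬝ᵥ (Aᵀ * A) *ᵥ x = A *ᵥ x ⬝ᵥ A *ᵥ x := by
  rw [← mulVec_mulVec, dotProduct_mulVec, vecMul_transpose]

theorem card_representations_reindex {n n' : Type*} [Fintype n] [Fintype n'] (e : n ≃ n')
    (A : Matrix n n ℤ) (t : ℤ) :
    Nat.card {x : n' → ℤ | x ⬝ᵥ ((reindex e e A)ᵀ * reindex e e A) *ᵥ x = t} =
      Nat.card {x : n → ℤ | x ⬝ᵥ (Aᵀ * A) *ᵥ x = t} := by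
  refine Nat.card_congr ((e.symm.arrowCongr (Equiv.refl ℤ)).subtypeEquiv fun x => ?_)
  simp only [Set.mem_ofPred_eq, dotProduct_transpose_mul_mulVec_self, reindex_apply,
    submatrix_mulVec_equiv, Equiv.symm_symm, comp_equiv_symm_dotProduct, Function.comp_assoc,
    Equiv.symm_comp_self, Function.comp_id]
  rfl

theorem exists_equiv_comp_eq_of_map_univ_eq {ι κ β : Type*} [Fintype ι] [Fintype κ]
    [DecidableEq β] {f : ι → β} {g : κ → β} (h : univ.val.map f = univ.val.map g) :
    ∃ e : ι ≃ κ, ∀ i, g (e i) = f i := by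
  have hfib (b : β) : Nonempty ({i // f i = b} ≃ {j // g j = b}) := by
    refine Fintype.card_eq.mp ?_
    have := congrArg (Multiset.count b) h
    simp only [Multiset.count_map, eq_comm (a := b)] at this
    simpa only [Fintype.card_subtype, Finset.card_def, Finset.filter_val] using this
  exact ⟨Equiv.ofFiberEquiv fun b => (hfib b).some, Equiv.ofFiberEquiv_map _⟩

section SignedPermutation

variable {ν : Type*}

def signedPermEquiv (R : Type*) [AddCommGroup R] (s : ν → ℤˣ) (σ : Equiv.Perm ν) :
    (ν → R) ≃ (ν → R) where
  toFun w k := s k • w (σ k)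
  invFun v k := s (σ.symm k) • v (σ.symm k)
  left_inv w := by ext k; simp [smul_smul]
  right_inv v := by ext k; simp [smul_smul]

theorem signedPermEquiv_dotProduct_self [Fintype ν] {R : Type*} [CommRing R] (s : ν → ℤˣ)
    (σ : Equiv.Perm ν) (w : ν → R) :
    signedPermEquiv R s σ w ⬝ᵥ signedPermEquiv R s σ w = w ⬝ᵥ w := by
  have hs (k : ν) : s k • w (σ k) * s k • w (σ k) = w (σ k) * w (σ k) := by
    rw [smul_mul_smul_comm, Int.units_mul_self, one_smul]
  simp only [dotProduct, signedPermEquiv, Equiv.coe_fn_mk, hs]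
  exact Equiv.sum_comp σ fun k => w k * w k

theorem intCast_comp_signedPermEquiv {R : Type*} [Ring R] (s : ν → ℤˣ) (σ : Equiv.Perm ν)
    (w : ν → ℤ) :
    (Int.cast : ℤ → R) ∘ signedPermEquiv ℤ s σ w = signedPermEquiv R s σ (Int.cast ∘ w) := by
  ext k
  simp [signedPermEquiv, Units.smul_def]

end SignedPermutation

section ResidueShell

variable {ν : Type*} [Fintype ν]

def residueShell (m : ℕ) (c : ν → ZMod m) (t : ℤ) : Set (ν → ℤ) :=
  {w | Int.cast ∘ w = c ∧ w ⬝ᵥ w = t}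

variable {m : ℕ}

def residueShellEquiv (s : ν → ℤˣ) (σ : Equiv.Perm ν) (c : ν → ZMod m) (t : ℤ) :
    residueShell m c t ≃ residueShell m (signedPermEquiv (ZMod m) s σ c) t :=
  (signedPermEquiv ℤ s σ).subtypeEquiv fun w => by
    simp only [residueShell, Set.mem_ofPred_eq, intCast_comp_signedPermEquiv,
      signedPermEquiv_dotProduct_self, (signedPermEquiv (ZMod m) s σ).apply_eq_iff_eq]

/-- `valMinAbs` picks the representative in `(-m/2, m/2]`, so `|c k|` determines `c k` up to
sign. -/
def absResidues (c : ν → ZMod m) : Multiset ℕ :=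
  univ.val.map fun k => (c k).valMinAbs.natAbs

theorem exists_signedPermEquiv_eq_of_absResidues_eq {c c' : ν → ZMod m}
    (h : absResidues c = absResidues c') : ∃ s σ, signedPermEquiv (ZMod m) s σ c = c' := by
  obtain ⟨σ, hσ⟩ := exists_equiv_comp_eq_of_map_univ_eq h.symm
  have hsign (k : ν) : c' k = c (σ k) ∨ c' k = -c (σ k) :=
    ZMod.natAbs_valMinAbs_eq_natAbs_valMinAbs.mp (hσ k).symm
  refine ⟨fun k => if c' k = c (σ k) then 1 else -1, σ, funext fun k => ?_⟩
  simp only [signedPermEquiv, Equiv.coe_fn_mk]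
  split_ifs with hk
  · simp [hk]
  · simp [(hsign k).resolve_left hk]

theorem nonempty_residueShell_equiv_of_absResidues_eq {c c' : ν → ZMod m}
    (h : absResidues c = absResidues c') (t : ℤ) :
    Nonempty (residueShell m c t ≃ residueShell m c' t) := by
  obtain ⟨s, σ, rfl⟩ := exists_signedPermEquiv_eq_of_absResidues_eq h
  exact ⟨residueShellEquiv s σ c t⟩

theorem nonempty_sigma_residueShell_equiv {ι κ : Type*} [Fintype ι] [Fintype κ]
    {f : ι → ν → ZMod m} {g : κ → ν → ZMod m}
    (h : univ.val.map (absResidues ∘ f) = univ.val.map (absResidues ∘ g)) (t : ℤ) :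
    Nonempty ((Σ i, residueShell m (f i) t) ≃ Σ j, residueShell m (g j) t) := by
  obtain ⟨e, he⟩ := exists_equiv_comp_eq_of_map_univ_eq h
  exact ⟨e.sigmaCongr fun i => (nonempty_residueShell_equiv_of_absResidues_eq (he i).symm t).some⟩

end ResidueShell

section ConstructionA

variable {α β : Type*} [Fintype α] [Fintype β] [DecidableEq α] [DecidableEq β]

def systematicCodeword (m : ℕ) (B : Matrix β α ℤ) (p : α → ZMod m) : α ⊕ β → ZMod m :=
  Sum.elim p (B.map Int.cast *ᵥ p)

def constructionABasis (m : ℕ) (B : Matrix β α ℤ) : Matrix (α ⊕ β) (α ⊕ β) ℤ :=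
  fromBlocks 1 0 B ((m : ℤ) • 1)

variable (m : ℕ) (B : Matrix β α ℤ)

theorem constructionABasis_mulVec (x : α ⊕ β → ℤ) :
    constructionABasis m B *ᵥ x =
      Sum.elim (x ∘ Sum.inl) (B *ᵥ (x ∘ Sum.inl) + (m : ℤ) • (x ∘ Sum.inr)) := by
  simp [constructionABasis, fromBlocks_mulVec]

theorem intCast_comp_constructionABasis_mulVec (x : α ⊕ β → ℤ) :
    Int.cast ∘ (constructionABasis m B *ᵥ x) =
      systematicCodeword m B (Int.cast ∘ x ∘ Sum.inl) := by
  ext (a | b)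
  · simp [constructionABasis_mulVec, systematicCodeword]
  · simp [constructionABasis_mulVec, systematicCodeword, mulVec, dotProduct]

theorem constructionABasis_mulVec_injective [NeZero m] :
    Function.Injective (constructionABasis m B *ᵥ ·) := by
  intro x y hxy
  simp only [constructionABasis_mulVec] at hxy
  have hl : x ∘ Sum.inl = y ∘ Sum.inl := by simpa using congrArg (· ∘ Sum.inl) hxy
  have hr : x ∘ Sum.inr = y ∘ Sum.inr := by
    have := congrArg (· ∘ Sum.inr) hxy
    simp only [Sum.elim_comp_inr, hl, add_right_inj] at this
    exact smul_right_injective _ (Int.natCast_ne_zero.mpr (NeZero.ne m)) this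
  ext (a | b)
  · exact congrFun hl a
  · exact congrFun hr b

theorem exists_constructionABasis_mulVec_eq [NeZero m] {w : α ⊕ β → ℤ} {p : α → ZMod m}
    (hw : Int.cast ∘ w = systematicCodeword m B p) : ∃ x, constructionABasis m B *ᵥ x = w := by
  have hp : p = Int.cast ∘ w ∘ Sum.inl := by
    funext a
    simpa [systematicCodeword] using (congrFun hw (Sum.inl a)).symm
  have hdvd (b : β) : (m : ℤ) ∣ w (Sum.inr b) - (B *ᵥ (w ∘ Sum.inl)) b := by
    rw [← ZMod.intCast_zmod_eq_zero_iff_dvd, Int.cast_sub, sub_eq_zero]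
    have := congrFun hw (Sum.inr b)
    simp only [Function.comp_apply, systematicCodeword, Sum.elim_inr, hp] at this
    rw [this]
    exact (RingHom.map_mulVec (Int.castRingHom (ZMod m)) B _ b).symm
  refine ⟨Sum.elim (w ∘ Sum.inl) fun b => (w (Sum.inr b) - (B *ᵥ (w ∘ Sum.inl)) b) / m, ?_⟩
  ext (a | b)
  · simp [constructionABasis_mulVec]
  · simp [constructionABasis_mulVec, Int.mul_ediv_cancel' (hdvd b)]

noncomputable def representationsEquivSigmaResidueShell [NeZero m] (t : ℤ) :
    {x : α ⊕ β → ℤ | x ⬝ᵥ ((constructionABasis m B)ᵀ * constructionABasis m B) *ᵥ x = t} ≃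
      Σ p, residueShell m (systematicCodeword m B p) t := by
  refine Equiv.ofBijective (fun x => ⟨Int.cast ∘ x.1 ∘ Sum.inl, constructionABasis m B *ᵥ x.1,
    intCast_comp_constructionABasis_mulVec m B x.1,
    (dotProduct_transpose_mul_mulVec_self _ _).symm.trans x.2⟩) ⟨fun x y hxy => ?_, ?_⟩
  · have hval := congrArg
      (fun z : Σ p, residueShell m (systematicCodeword m B p) t => (z.2 : α ⊕ β → ℤ)) hxy
    exact Subtype.ext (constructionABasis_mulVec_injective m B hval)
  · rintro ⟨p, w, hw, hnorm⟩
    obtain ⟨x, rfl⟩ := exists_constructionABasis_mulVec_eq m B hw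
    refine ⟨⟨x, (dotProduct_transpose_mul_mulVec_self _ _).trans hnorm⟩, Sigma.subtype_ext ?_ rfl⟩
    rw [intCast_comp_constructionABasis_mulVec] at hw
    simpa only [systematicCodeword, Sum.elim_comp_inl] using congrArg (· ∘ Sum.inl) hw

theorem card_representations_eq_of_map_absResidues_eq [NeZero m] {B₁ B₂ : Matrix β α ℤ}
    (h : univ.val.map (absResidues ∘ systematicCodeword m B₁) =
      univ.val.map (absResidues ∘ systematicCodeword m B₂)) (t : ℤ) :
    Nat.card {x | x ⬝ᵥ ((constructionABasis m B₁)ᵀ * constructionABasis m B₁) *ᵥ x = t} =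
      Nat.card {x | x ⬝ᵥ ((constructionABasis m B₂)ᵀ * constructionABasis m B₂) *ᵥ x = t} :=
  Nat.card_congr <| (representationsEquivSigmaResidueShell m B₁ t).trans <|
    (nonempty_sigma_residueShell_equiv h t).some.trans
      (representationsEquivSigmaResidueShell m B₂ t).symm

end ConstructionA

def paperB : Fin 3 → Matrix (Fin 3) (Fin 3) ℤ :=
  ![!![1,1,0; 2,0,1; 1,2,1], !![2,1,0; 0,1,1; 3,2,1], !![2,1,0; 0,1,1; 2,3,1]]

theorem paperA_eq_reindex_constructionABasis (i : Fin 3) :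
    paperA i = reindex finSumFinEquiv finSumFinEquiv (constructionABasis 5 (paperB i)) := by
  revert i
  decide +kernel

theorem map_absResidues_paperB (i : Fin 3) :
    univ.val.map (absResidues ∘ systematicCodeword 5 (paperB i)) =
      univ.val.map (absResidues ∘ systematicCodeword 5 (paperB 0)) := by
  revert i
  decide +kernel

/-- with `Qᵢ = AᵢᵀAᵢ`, for every integer `t ≥ 0` and all `i, j`, the
representation numbers satisfy `R(Qᵢ, t) = R(Qⱼ, t)`; i.e. the lattices `Aᵢℤ⁶` are
mutually isospectral. -/
theorem stmt_5 :
    ∀ t : ℤ, 0 ≤ t → ∀ i j : Fin 3,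
      Nat.card {x : Fin 6 → ℤ | x ⬝ᵥ ((paperA i)ᵀ * paperA i).mulVec x = t} =
      Nat.card {x : Fin 6 → ℤ | x ⬝ᵥ ((paperA j)ᵀ * paperA j).mulVec x = t} := by
  intro t _ i j
  rw [paperA_eq_reindex_constructionABasis, paperA_eq_reindex_constructionABasis,
    card_representations_reindex, card_representations_reindex]
  exact card_representations_eq_of_map_absResidues_eq 5
    ((map_absResidues_paperB i).trans (map_absResidues_paperB j).symm) t
end

section
/- Let A₁, A₂, A₃ be the 6×6 integer matrices with rows A₁ = [[1,0,0,0,0,0],[0,1,0,0,0,0],[0,0,1,0,0,0],[1,1,0,5,0,0],[2,0,1,0,5,0],[1,2,1,0,0,5]], A₂ = [[1,0,0,0,0,0],[0,1,0,0,0,0],[0,0,1,0,0,0],[2,1,0,5,0,0],[0,1,1,0,5,0],[3,2,1,0,0,5]], A₃ = [[1,0,0,0,0,0],[0,1,0,0,0,0],[0,0,1,0,0,0],[2,1,0,5,0,0],[0,1,1,0,5,0],[2,3,1,0,0,5]], and let Qᵢ = AᵢᵀAᵢ. Then for all i ≠ j in {1,2,3}, there is no 6×6 integer matrix B with det(B)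 = ±1 such that BᵀQᵢB = Qⱼ; i.e. the quadratic forms Q₁, Q₂, Q₃ are pairwise integrally inequivalent. -/
set_option maxHeartbeats 4000000

open Matrix

lemma cons_val_five' {α : Type*} (x : α) (u : Fin 5 → α) : Matrix.vecCons x u 5 = u 4 := rfl

lemma sq3 (n : ℤ) (h : n*n ≤ 3) : -1 ≤ n ∧ n ≤ 1 := by
  constructor <;> nlinarith [mul_self_nonneg (n+1), mul_self_nonneg (n-1)]

lemma sq5 (n : ℤ) (h : n*n ≤ 5) : -2 ≤ n ∧ n ≤ 2 := by
  constructor <;> nlinarith [mul_self_nonneg (n+2), mul_self_nonneg (n-2)]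

lemma transfer (Q P B : Matrix (Fin 6) (Fin 6) ℤ) (h : Bᵀ * Q * B = P) (x y : Fin 6 → ℤ) :
    (B *ᵥ x) ⬝ᵥ (Q *ᵥ (B *ᵥ y)) = x ⬝ᵥ (P *ᵥ y) := by
  conv_rhs => rw [← h, Matrix.mul_assoc, ← Matrix.mulVec_mulVec,
    Matrix.dotProduct_mulVec, Matrix.vecMul_transpose, ← Matrix.mulVec_mulVec]

lemma Q0eq : (paperA 0)ᵀ * paperA 0 =
    !![7,3,3,5,10,5; 3,6,2,5,0,10; 3,2,3,0,5,5; 5,5,0,25,0,0; 10,0,5,0,25,0; 5,10,5,0,0,25] := by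
  decide

lemma Q1eq : (paperA 1)ᵀ * paperA 1 =
    !![14,8,3,10,0,15; 8,7,3,5,5,10; 3,3,3,0,5,5; 10,5,0,25,0,0; 0,5,5,0,25,0; 15,10,5,0,0,25] := by
  decide

lemma Q2eq : (paperA 2)ᵀ * paperA 2 =
    !![9,8,2,10,0,10; 8,12,4,5,5,15; 2,4,3,0,5,5; 10,5,0,25,0,0; 0,5,5,0,25,0; 10,15,5,0,0,25] := by
  decide

lemma pair0 (x y : Fin 6 → ℤ) :
    x ⬝ᵥ (((paperA 0)ᵀ * paperA 0) *ᵥ y) =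
      x 0 * y 0 + x 1 * y 1 + x 2 * y 2
      + (x 0 + x 1 + 5*x 3) * (y 0 + y 1 + 5*y 3)
      + (2*x 0 + x 2 + 5*x 4) * (2*y 0 + y 2 + 5*y 4)
      + (x 0 + 2*x 1 + x 2 + 5*x 5) * (y 0 + 2*y 1 + y 2 + 5*y 5) := by
  rw [Q0eq]
  simp [Matrix.mulVec, dotProduct, Fin.sum_univ_six, cons_val_five', Matrix.vecHead, Matrix.vecTail]
  ring

lemma pair1 (x y : Fin 6 → ℤ) :
    x ⬝ᵥ (((paperA 1)ᵀ * paperA 1) *ᵥ y) =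
      x 0 * y 0 + x 1 * y 1 + x 2 * y 2
      + (2*x 0 + x 1 + 5*x 3) * (2*y 0 + y 1 + 5*y 3)
      + (x 1 + x 2 + 5*x 4) * (y 1 + y 2 + 5*y 4)
      + (3*x 0 + 2*x 1 + x 2 + 5*x 5) * (3*y 0 + 2*y 1 + y 2 + 5*y 5) := by
  rw [Q1eq]
  simp [Matrix.mulVec, dotProduct, Fin.sum_univ_six, cons_val_five', Matrix.vecHead, Matrix.vecTail]
  ring

lemma pair2 (x y : Fin 6 → ℤ) :
    x ⬝ᵥ (((paperA 2)ᵀ * paperA 2) *ᵥ y) =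
      x 0 * y 0 + x 1 * y 1 + x 2 * y 2
      + (2*x 0 + x 1 + 5*x 3) * (2*y 0 + y 1 + 5*y 3)
      + (x 1 + x 2 + 5*x 4) * (y 1 + y 2 + 5*y 4)
      + (2*x 0 + 3*x 1 + x 2 + 5*x 5) * (2*y 0 + 3*y 1 + y 2 + 5*y 5) := by
  rw [Q2eq]
  simp [Matrix.mulVec, dotProduct, Fin.sum_univ_six, cons_val_five', Matrix.vecHead, Matrix.vecTail]
  ring

lemma c0_3 (a b c d e f : ℤ)
    (h : a * a + b * b + c * c + (a+b+5*d)*(a+b+5*d) + (2*a+c+5*e)*(2*a+c+5*e)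
      + (a+2*b+c+5*f)*(a+2*b+c+5*f) = 3) :
    a = 0 ∧ b = 0 ∧ (c = 1 ∨ c = -1) ∧ d = 0 ∧ e = 0 ∧ f = 0 := by
  obtain ⟨ha1, ha2⟩ := sq3 a (by nlinarith [mul_self_nonneg b, mul_self_nonneg c, mul_self_nonneg (a+b+5*d), mul_self_nonneg (2*a+c+5*e), mul_self_nonneg (a+2*b+c+5*f)])
  obtain ⟨hb1, hb2⟩ := sq3 b (by nlinarith [mul_self_nonneg a, mul_self_nonneg c, mul_self_nonneg (a+b+5*d), mul_self_nonneg (2*a+c+5*e), mul_self_nonneg (a+2*b+c+5*f)])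
  obtain ⟨hc1, hc2⟩ := sq3 c (by nlinarith [mul_self_nonneg a, mul_self_nonneg b, mul_self_nonneg (a+b+5*d), mul_self_nonneg (2*a+c+5*e), mul_self_nonneg (a+2*b+c+5*f)])
  obtain ⟨hd1, hd2⟩ := sq3 (a+b+5*d) (by nlinarith [mul_self_nonneg a, mul_self_nonneg b, mul_self_nonneg c, mul_self_nonneg (2*a+c+5*e), mul_self_nonneg (a+2*b+c+5*f)])
  obtain ⟨he1, he2⟩ := sq3 (2*a+c+5*e) (by nlinarith [mul_self_nonneg a, mul_self_nonneg b, mul_self_nonneg c, mul_self_nonneg (a+b+5*d), mul_self_nonneg (a+2*b+c+5*f)])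
  obtain ⟨hf1, hf2⟩ := sq3 (a+2*b+c+5*f) (by nlinarith [mul_self_nonneg a, mul_self_nonneg b, mul_self_nonneg c, mul_self_nonneg (a+b+5*d), mul_self_nonneg (2*a+c+5*e)])
  have hd : d = 0 := by omega
  have he : e = 0 := by omega
  have hf1' : -1 ≤ f := by omega
  have hf2' : f ≤ 1 := by omega
  subst hd he
  interval_cases a <;> interval_cases b <;> interval_cases c <;> interval_cases f <;> omega

lemma c0_5 (a b c d e f : ℤ)
    (h : a * a + b * b + c * c + (a+b+5*d)*(a+b+5*d) + (2*a+c+5*e)*(2*a+c+5*e)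
      + (a+2*b+c+5*f)*(a+2*b+c+5*f) = 5) :
    a = 0 ∧ (b = 1 ∧ c = -1 ∨ b = -1 ∧ c = 1) ∧ d = 0 ∧ e = 0 ∧ f = 0 := by
  obtain ⟨ha1, ha2⟩ := sq5 a (by nlinarith [mul_self_nonneg b, mul_self_nonneg c, mul_self_nonneg (a+b+5*d), mul_self_nonneg (2*a+c+5*e), mul_self_nonneg (a+2*b+c+5*f)])
  obtain ⟨hb1, hb2⟩ := sq5 b (by nlinarith [mul_self_nonneg a, mul_self_nonneg c, mul_self_nonneg (a+b+5*d), mul_self_nonneg (2*a+c+5*e), mul_self_nonneg (a+2*b+c+5*f)])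
  obtain ⟨hc1, hc2⟩ := sq5 c (by nlinarith [mul_self_nonneg a, mul_self_nonneg b, mul_self_nonneg (a+b+5*d), mul_self_nonneg (2*a+c+5*e), mul_self_nonneg (a+2*b+c+5*f)])
  obtain ⟨hd1, hd2⟩ := sq5 (a+b+5*d) (by nlinarith [mul_self_nonneg a, mul_self_nonneg b, mul_self_nonneg c, mul_self_nonneg (2*a+c+5*e), mul_self_nonneg (a+2*b+c+5*f)])
  obtain ⟨he1, he2⟩ := sq5 (2*a+c+5*e) (by nlinarith [mul_self_nonneg a, mul_self_nonneg b, mul_self_nonneg c, mul_self_nonneg (a+b+5*d), mul_self_nonneg (a+2*b+c+5*f)])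
  obtain ⟨hf1, hf2⟩ := sq5 (a+2*b+c+5*f) (by nlinarith [mul_self_nonneg a, mul_self_nonneg b, mul_self_nonneg c, mul_self_nonneg (a+b+5*d), mul_self_nonneg (2*a+c+5*e)])
  have hd1' : -1 ≤ d := by omega
  have hd2' : d ≤ 1 := by omega
  have he1' : -1 ≤ e := by omega
  have he2' : e ≤ 1 := by omega
  have hf1' : -2 ≤ f := by omega
  have hf2' : f ≤ 2 := by omega
  interval_cases a <;> interval_cases b <;> interval_cases c <;>
    interval_cases d <;> interval_cases e <;> interval_cases f <;> omega

lemma c1_3 (a b c d e f : ℤ)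
    (h : a * a + b * b + c * c + (2*a+b+5*d)*(2*a+b+5*d) + (b+c+5*e)*(b+c+5*e)
      + (3*a+2*b+c+5*f)*(3*a+2*b+c+5*f) = 3) :
    a = 0 ∧ b = 0 ∧ (c = 1 ∨ c = -1) ∧ d = 0 ∧ e = 0 ∧ f = 0 := by
  obtain ⟨ha1, ha2⟩ := sq3 a (by nlinarith [mul_self_nonneg b, mul_self_nonneg c, mul_self_nonneg (2*a+b+5*d), mul_self_nonneg (b+c+5*e), mul_self_nonneg (3*a+2*b+c+5*f)])
  obtain ⟨hb1, hb2⟩ := sq3 b (by nlinarith [mul_self_nonneg a, mul_self_nonneg c, mul_self_nonneg (2*a+b+5*d), mul_self_nonneg (b+c+5*e), mul_self_nonneg (3*a+2*b+c+5*f)])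
  obtain ⟨hc1, hc2⟩ := sq3 c (by nlinarith [mul_self_nonneg a, mul_self_nonneg b, mul_self_nonneg (2*a+b+5*d), mul_self_nonneg (b+c+5*e), mul_self_nonneg (3*a+2*b+c+5*f)])
  obtain ⟨hd1, hd2⟩ := sq3 (2*a+b+5*d) (by nlinarith [mul_self_nonneg a, mul_self_nonneg b, mul_self_nonneg c, mul_self_nonneg (b+c+5*e), mul_self_nonneg (3*a+2*b+c+5*f)])
  obtain ⟨he1, he2⟩ := sq3 (b+c+5*e) (by nlinarith [mul_self_nonneg a, mul_self_nonneg b, mul_self_nonneg c, mul_self_nonneg (2*a+b+5*d), mul_self_nonneg (3*a+2*b+c+5*f)])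
  obtain ⟨hf1, hf2⟩ := sq3 (3*a+2*b+c+5*f) (by nlinarith [mul_self_nonneg a, mul_self_nonneg b, mul_self_nonneg c, mul_self_nonneg (2*a+b+5*d), mul_self_nonneg (b+c+5*e)])
  have hd : d = 0 := by omega
  have he : e = 0 := by omega
  have hf1' : -1 ≤ f := by omega
  have hf2' : f ≤ 1 := by omega
  subst hd he
  interval_cases a <;> interval_cases b <;> interval_cases c <;> interval_cases f <;> omega

lemma c1_5 (a b c d e f : ℤ)
    (h : a * a + b * b + c * c + (2*a+b+5*d)*(2*a+b+5*d) + (b+c+5*e)*(b+c+5*e)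
      + (3*a+2*b+c+5*f)*(3*a+2*b+c+5*f) = 5) :
    (a = 1 ∧ b = -1 ∨ a = -1 ∧ b = 1) ∧ c = 0 ∧ d = 0 ∧ e = 0 ∧ f = 0 := by
  obtain ⟨ha1, ha2⟩ := sq5 a (by nlinarith [mul_self_nonneg b, mul_self_nonneg c, mul_self_nonneg (2*a+b+5*d), mul_self_nonneg (b+c+5*e), mul_self_nonneg (3*a+2*b+c+5*f)])
  obtain ⟨hb1, hb2⟩ := sq5 b (by nlinarith [mul_self_nonneg a, mul_self_nonneg c, mul_self_nonneg (2*a+b+5*d), mul_self_nonneg (b+c+5*e), mul_self_nonneg (3*a+2*b+c+5*f)])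
  obtain ⟨hc1, hc2⟩ := sq5 c (by nlinarith [mul_self_nonneg a, mul_self_nonneg b, mul_self_nonneg (2*a+b+5*d), mul_self_nonneg (b+c+5*e), mul_self_nonneg (3*a+2*b+c+5*f)])
  obtain ⟨hd1, hd2⟩ := sq5 (2*a+b+5*d) (by nlinarith [mul_self_nonneg a, mul_self_nonneg b, mul_self_nonneg c, mul_self_nonneg (b+c+5*e), mul_self_nonneg (3*a+2*b+c+5*f)])
  obtain ⟨he1, he2⟩ := sq5 (b+c+5*e) (by nlinarith [mul_self_nonneg a, mul_self_nonneg b, mul_self_nonneg c, mul_self_nonneg (2*a+b+5*d), mul_self_nonneg (3*a+2*b+c+5*f)])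
  obtain ⟨hf1, hf2⟩ := sq5 (3*a+2*b+c+5*f) (by nlinarith [mul_self_nonneg a, mul_self_nonneg b, mul_self_nonneg c, mul_self_nonneg (2*a+b+5*d), mul_self_nonneg (b+c+5*e)])
  have hd1' : -1 ≤ d := by omega
  have hd2' : d ≤ 1 := by omega
  have he1' : -1 ≤ e := by omega
  have he2' : e ≤ 1 := by omega
  have hf1' : -2 ≤ f := by omega
  have hf2' : f ≤ 2 := by omega
  interval_cases a <;> interval_cases b <;> interval_cases c <;>
    interval_cases d <;> interval_cases e <;> interval_cases f <;> omega

lemma c2_3 (a b c d e f : ℤ)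
    (h : a * a + b * b + c * c + (2*a+b+5*d)*(2*a+b+5*d) + (b+c+5*e)*(b+c+5*e)
      + (2*a+3*b+c+5*f)*(2*a+3*b+c+5*f) = 3) :
    a = 0 ∧ b = 0 ∧ (c = 1 ∨ c = -1) ∧ d = 0 ∧ e = 0 ∧ f = 0 := by
  obtain ⟨ha1, ha2⟩ := sq3 a (by nlinarith [mul_self_nonneg b, mul_self_nonneg c, mul_self_nonneg (2*a+b+5*d), mul_self_nonneg (b+c+5*e), mul_self_nonneg (2*a+3*b+c+5*f)])
  obtain ⟨hb1, hb2⟩ := sq3 b (by nlinarith [mul_self_nonneg a, mul_self_nonneg c, mul_self_nonneg (2*a+b+5*d), mul_self_nonneg (b+c+5*e), mul_self_nonneg (2*a+3*b+c+5*f)])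
  obtain ⟨hc1, hc2⟩ := sq3 c (by nlinarith [mul_self_nonneg a, mul_self_nonneg b, mul_self_nonneg (2*a+b+5*d), mul_self_nonneg (b+c+5*e), mul_self_nonneg (2*a+3*b+c+5*f)])
  obtain ⟨hd1, hd2⟩ := sq3 (2*a+b+5*d) (by nlinarith [mul_self_nonneg a, mul_self_nonneg b, mul_self_nonneg c, mul_self_nonneg (b+c+5*e), mul_self_nonneg (2*a+3*b+c+5*f)])
  obtain ⟨he1, he2⟩ := sq3 (b+c+5*e) (by nlinarith [mul_self_nonneg a, mul_self_nonneg b, mul_self_nonneg c, mul_self_nonneg (2*a+b+5*d), mul_self_nonneg (2*a+3*b+c+5*f)])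
  obtain ⟨hf1, hf2⟩ := sq3 (2*a+3*b+c+5*f) (by nlinarith [mul_self_nonneg a, mul_self_nonneg b, mul_self_nonneg c, mul_self_nonneg (2*a+b+5*d), mul_self_nonneg (b+c+5*e)])
  have hd : d = 0 := by omega
  have he : e = 0 := by omega
  have hf1' : -1 ≤ f := by omega
  have hf2' : f ≤ 1 := by omega
  subst hd he
  interval_cases a <;> interval_cases b <;> interval_cases c <;> interval_cases f <;> omega

lemma c2_5 (a b c d e f : ℤ)
    (h : a * a + b * b + c * c + (2*a+b+5*d)*(2*a+b+5*d) + (b+c+5*e)*(b+c+5*e)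
      + (2*a+3*b+c+5*f)*(2*a+3*b+c+5*f) = 5) :
    (a = 1 ∧ b = -1 ∨ a = -1 ∧ b = 1) ∧ c = 0 ∧ d = 0 ∧ e = 0 ∧ f = 0 := by
  obtain ⟨ha1, ha2⟩ := sq5 a (by nlinarith [mul_self_nonneg b, mul_self_nonneg c, mul_self_nonneg (2*a+b+5*d), mul_self_nonneg (b+c+5*e), mul_self_nonneg (2*a+3*b+c+5*f)])
  obtain ⟨hb1, hb2⟩ := sq5 b (by nlinarith [mul_self_nonneg a, mul_self_nonneg c, mul_self_nonneg (2*a+b+5*d), mul_self_nonneg (b+c+5*e), mul_self_nonneg (2*a+3*b+c+5*f)])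
  obtain ⟨hc1, hc2⟩ := sq5 c (by nlinarith [mul_self_nonneg a, mul_self_nonneg b, mul_self_nonneg (2*a+b+5*d), mul_self_nonneg (b+c+5*e), mul_self_nonneg (2*a+3*b+c+5*f)])
  obtain ⟨hd1, hd2⟩ := sq5 (2*a+b+5*d) (by nlinarith [mul_self_nonneg a, mul_self_nonneg b, mul_self_nonneg c, mul_self_nonneg (b+c+5*e), mul_self_nonneg (2*a+3*b+c+5*f)])
  obtain ⟨he1, he2⟩ := sq5 (b+c+5*e) (by nlinarith [mul_self_nonneg a, mul_self_nonneg b, mul_self_nonneg c, mul_self_nonneg (2*a+b+5*d), mul_self_nonneg (2*a+3*b+c+5*f)])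
  obtain ⟨hf1, hf2⟩ := sq5 (2*a+3*b+c+5*f) (by nlinarith [mul_self_nonneg a, mul_self_nonneg b, mul_self_nonneg c, mul_self_nonneg (2*a+b+5*d), mul_self_nonneg (b+c+5*e)])
  have hd1' : -1 ≤ d := by omega
  have hd2' : d ≤ 1 := by omega
  have he1' : -1 ≤ e := by omega
  have he2' : e ≤ 1 := by omega
  have hf1' : -2 ≤ f := by omega
  have hf2' : f ≤ 2 := by omega
  interval_cases a <;> interval_cases b <;> interval_cases c <;>
    interval_cases d <;> interval_cases e <;> interval_cases f <;> omega

lemma range0 (x y : Fin 6 → ℤ)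
    (h3 : x ⬝ᵥ (((paperA 0)ᵀ * paperA 0) *ᵥ x) = 3)
    (h5 : y ⬝ᵥ (((paperA 0)ᵀ * paperA 0) *ᵥ y) = 5) :
    x ⬝ᵥ (((paperA 0)ᵀ * paperA 0) *ᵥ y) = 1 ∨ x ⬝ᵥ (((paperA 0)ᵀ * paperA 0) *ᵥ y) = -1 := by
  rw [pair0 x x] at h3
  rw [pair0 y y] at h5
  rw [pair0 x y]
  obtain ⟨hx0, hx1, hx2, hx3, hx4, hx5⟩ := c0_3 _ _ _ _ _ _ h3
  obtain ⟨hy0, hy1, hy2, hy3, hy4⟩ := c0_5 _ _ _ _ _ _ h5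
  rcases hx2 with h | h <;> rcases hy1 with ⟨hb, hc⟩ | ⟨hb, hc⟩ <;>
    simp only [hx0, hx1, h, hx3, hx4, hx5, hy0, hb, hc, hy2, hy3, hy4] <;> norm_num

lemma range1 (x y : Fin 6 → ℤ)
    (h3 : x ⬝ᵥ (((paperA 1)ᵀ * paperA 1) *ᵥ x) = 3)
    (h5 : y ⬝ᵥ (((paperA 1)ᵀ * paperA 1) *ᵥ y) = 5) :
    x ⬝ᵥ (((paperA 1)ᵀ * paperA 1) *ᵥ y) = 0 := by
  rw [pair1 x x] at h3
  rw [pair1 y y] at h5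
  rw [pair1 x y]
  obtain ⟨hx0, hx1, hx2, hx3, hx4, hx5⟩ := c1_3 _ _ _ _ _ _ h3
  obtain ⟨hy0, hy1, hy2, hy3, hy4⟩ := c1_5 _ _ _ _ _ _ h5
  rcases hx2 with h | h <;> rcases hy0 with ⟨ha, hb⟩ | ⟨ha, hb⟩ <;>
    simp only [hx0, hx1, h, hx3, hx4, hx5, ha, hb, hy1, hy2, hy3, hy4] <;> norm_num

lemma range2 (x y : Fin 6 → ℤ)
    (h3 : x ⬝ᵥ (((paperA 2)ᵀ * paperA 2) *ᵥ x) = 3)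
    (h5 : y ⬝ᵥ (((paperA 2)ᵀ * paperA 2) *ᵥ y) = 5) :
    x ⬝ᵥ (((paperA 2)ᵀ * paperA 2) *ᵥ y) = 2 ∨ x ⬝ᵥ (((paperA 2)ᵀ * paperA 2) *ᵥ y) = -2 := by
  rw [pair2 x x] at h3
  rw [pair2 y y] at h5
  rw [pair2 x y]
  obtain ⟨hx0, hx1, hx2, hx3, hx4, hx5⟩ := c2_3 _ _ _ _ _ _ h3
  obtain ⟨hy0, hy1, hy2, hy3, hy4⟩ := c2_5 _ _ _ _ _ _ h5
  rcases hx2 with h | h <;> rcases hy0 with ⟨ha, hb⟩ | ⟨ha, hb⟩ <;>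
    simp only [hx0, hx1, h, hx3, hx4, hx5, ha, hb, hy1, hy2, hy3, hy4] <;> norm_num

-- concrete evaluations
lemma e0_33 : (![0,0,1,0,0,0] : Fin 6 → ℤ) ⬝ᵥ (((paperA 0)ᵀ * paperA 0) *ᵥ ![0,0,1,0,0,0]) = 3 := by decide
lemma e0_55 : (![0,1,-1,0,0,0] : Fin 6 → ℤ) ⬝ᵥ (((paperA 0)ᵀ * paperA 0) *ᵥ ![0,1,-1,0,0,0]) = 5 := by decide
lemma e0_35 : (![0,0,1,0,0,0] : Fin 6 → ℤ) ⬝ᵥ (((paperA 0)ᵀ * paperA 0) *ᵥ ![0,1,-1,0,0,0]) = -1 := by decide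
lemma e1_33 : (![0,0,1,0,0,0] : Fin 6 → ℤ) ⬝ᵥ (((paperA 1)ᵀ * paperA 1) *ᵥ ![0,0,1,0,0,0]) = 3 := by decide
lemma e1_55 : (![1,-1,0,0,0,0] : Fin 6 → ℤ) ⬝ᵥ (((paperA 1)ᵀ * paperA 1) *ᵥ ![1,-1,0,0,0,0]) = 5 := by decide
lemma e1_35 : (![0,0,1,0,0,0] : Fin 6 → ℤ) ⬝ᵥ (((paperA 1)ᵀ * paperA 1) *ᵥ ![1,-1,0,0,0,0]) = 0 := by decide
lemma e2_33 : (![0,0,1,0,0,0] : Fin 6 → ℤ) ⬝ᵥ (((paperA 2)ᵀ * paperA 2) *ᵥ ![0,0,1,0,0,0]) = 3 := by decide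
lemma e2_55 : (![1,-1,0,0,0,0] : Fin 6 → ℤ) ⬝ᵥ (((paperA 2)ᵀ * paperA 2) *ᵥ ![1,-1,0,0,0,0]) = 5 := by decide
lemma e2_35 : (![0,0,1,0,0,0] : Fin 6 → ℤ) ⬝ᵥ (((paperA 2)ᵀ * paperA 2) *ᵥ ![1,-1,0,0,0,0]) = -2 := by decide

/-- with `Qᵢ = AᵢᵀAᵢ`, for all `i ≠ j` there is no integer matrix `B` with
`det B = ±1` and `Bᵀ Qᵢ B = Qⱼ`; i.e. `Q₁, Q₂, Q₃` are pairwise integrally inequivalent. -/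
theorem stmt_9 :
    ∀ i j : Fin 3, i ≠ j →
      ¬ ∃ B : Matrix (Fin 6) (Fin 6) ℤ, (B.det = 1 ∨ B.det = -1) ∧
        Bᵀ * ((paperA i)ᵀ * paperA i) * B = (paperA j)ᵀ * paperA j := by
  intro i j hne hex
  obtain ⟨B, _, hQ⟩ := hex
  have htri : ∀ k : Fin 3, k = 0 ∨ k = 1 ∨ k = 2 := by decide
  rcases htri i with rfl | rfl | rfl <;> rcases htri j with rfl | rfl | rfl
  · exact hne rfl
  · -- i = 0, j = 1
    have h3 := transfer _ _ _ hQ ![0,0,1,0,0,0] ![0,0,1,0,0,0]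
    have h5 := transfer _ _ _ hQ ![1,-1,0,0,0,0] ![1,-1,0,0,0,0]
    have hp := transfer _ _ _ hQ ![0,0,1,0,0,0] ![1,-1,0,0,0,0]
    rw [e1_33] at h3; rw [e1_55] at h5; rw [e1_35] at hp
    rcases range0 _ _ h3 h5 with h | h <;> omega
  · -- i = 0, j = 2
    have h3 := transfer _ _ _ hQ ![0,0,1,0,0,0] ![0,0,1,0,0,0]
    have h5 := transfer _ _ _ hQ ![1,-1,0,0,0,0] ![1,-1,0,0,0,0]
    have hp := transfer _ _ _ hQ ![0,0,1,0,0,0] ![1,-1,0,0,0,0]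
    rw [e2_33] at h3; rw [e2_55] at h5; rw [e2_35] at hp
    rcases range0 _ _ h3 h5 with h | h <;> omega
  · -- i = 1, j = 0
    have h3 := transfer _ _ _ hQ ![0,0,1,0,0,0] ![0,0,1,0,0,0]
    have h5 := transfer _ _ _ hQ ![0,1,-1,0,0,0] ![0,1,-1,0,0,0]
    have hp := transfer _ _ _ hQ ![0,0,1,0,0,0] ![0,1,-1,0,0,0]
    rw [e0_33] at h3; rw [e0_55] at h5; rw [e0_35] at hp
    have := range1 _ _ h3 h5; omega
  · exact hne rfl
  · -- i = 1, j = 2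
    have h3 := transfer _ _ _ hQ ![0,0,1,0,0,0] ![0,0,1,0,0,0]
    have h5 := transfer _ _ _ hQ ![1,-1,0,0,0,0] ![1,-1,0,0,0,0]
    have hp := transfer _ _ _ hQ ![0,0,1,0,0,0] ![1,-1,0,0,0,0]
    rw [e2_33] at h3; rw [e2_55] at h5; rw [e2_35] at hp
    have := range1 _ _ h3 h5; omega
  · -- i = 2, j = 0
    have h3 := transfer _ _ _ hQ ![0,0,1,0,0,0] ![0,0,1,0,0,0]
    have h5 := transfer _ _ _ hQ ![0,1,-1,0,0,0] ![0,1,-1,0,0,0]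
    have hp := transfer _ _ _ hQ ![0,0,1,0,0,0] ![0,1,-1,0,0,0]
    rw [e0_33] at h3; rw [e0_55] at h5; rw [e0_35] at hp
    rcases range2 _ _ h3 h5 with h | h <;> omega
  · -- i = 2, j = 1
    have h3 := transfer _ _ _ hQ ![0,0,1,0,0,0] ![0,0,1,0,0,0]
    have h5 := transfer _ _ _ hQ ![1,-1,0,0,0,0] ![1,-1,0,0,0,0]
    have hp := transfer _ _ _ hQ ![0,0,1,0,0,0] ![1,-1,0,0,0,0]
    rw [e1_33] at h3; rw [e1_55] at h5; rw [e1_35] at hp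
    rcases range2 _ _ h3 h5 with h | h <;> omega
  · exact hne rfl
end

section
/- Let A₁ be the 6×6 integer matrix with rows [[1,0,0,0,0,0],[0,1,0,0,0,0],[0,0,1,0,0,0],[1,1,0,5,0,0],[2,0,1,0,5,0],[1,2,1,0,0,5]] and L₁ = A₁ℤ⁶. Then every nonzero v ∈ L₁ satisfies ‖v‖² ≥ 3, and the only v ∈ L₁ with ‖v‖² = 3 are v = (0,0,1,0,1,1) and v = −(0,0,1,0,1,1). -/
/-- The basis matrix `A₁` of the first lattice. -/
def paperA1 : Matrix (Fin 6) (Fin 6) ℤ :=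
  !![1,0,0,0,0,0; 0,1,0,0,0,0; 0,0,1,0,0,0; 1,1,0,5,0,0; 2,0,1,0,5,0; 1,2,1,0,0,5]

/-- The lattice `L₁ = A₁ℤ⁶`. -/
def paperL1 : Set (Fin 6 → ℤ) := {v | ∃ z : Fin 6 → ℤ, v = paperA1.mulVec z}

lemma paper_mulVec_eq (z : Fin 6 → ℤ) : paperA1.mulVec z =
    ![z 0, z 1, z 2, z 0+z 1+5*z 3, 2*z 0+z 2+5*z 4, z 0+2*z 1+z 2+5*z 5] := by
  simp [paperA1, Matrix.cons_mulVec, dotProduct, Fin.sum_univ_six,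
    Matrix.mulVec_empty,
    show (![(1:ℤ),0,0,0,0,0]) 5 = 0 from rfl,
    show (![(0:ℤ),1,0,0,0,0]) 5 = 0 from rfl,
    show (![(0:ℤ),0,1,0,0,0]) 5 = 0 from rfl,
    show (![(1:ℤ),1,0,5,0,0]) 5 = 0 from rfl,
    show (![(2:ℤ),0,1,0,5,0]) 5 = 0 from rfl,
    show (![(1:ℤ),2,1,0,0,5]) 5 = 5 from rfl]

lemma paper_vec6 (a b c d e f : ℤ) :
    (![a,b,c,d,e,f] : Fin 6 → ℤ) 0 = a ∧ (![a,b,c,d,e,f] : Fin 6 → ℤ) 1 = b ∧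
    (![a,b,c,d,e,f] : Fin 6 → ℤ) 2 = c ∧ (![a,b,c,d,e,f] : Fin 6 → ℤ) 3 = d ∧
    (![a,b,c,d,e,f] : Fin 6 → ℤ) 4 = e ∧ (![a,b,c,d,e,f] : Fin 6 → ℤ) 5 = f :=
  ⟨rfl, rfl, rfl, rfl, rfl, rfl⟩

lemma paper_sq_le (a : ℤ) (h : a^2 ≤ 3) : -1 ≤ a ∧ a ≤ 1 := by
  constructor <;> nlinarith [sq_nonneg (a+2), sq_nonneg (a-2)]

lemma paper_key (a b c d e f : ℤ)
    (h : a^2+b^2+c^2+(a+b+5*d)^2+(2*a+c+5*e)^2+(a+2*b+c+5*f)^2 ≤ 3) :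
    (a=0∧b=0∧c=0∧d=0∧e=0∧f=0) ∨ (a=0∧b=0∧c=1∧d=0∧e=0∧f=0)
      ∨ (a=0∧b=0∧c=-1∧d=0∧e=0∧f=0) := by
  have h0 := sq_nonneg a
  have h1 := sq_nonneg b
  have h2 := sq_nonneg c
  have h3 := sq_nonneg (a+b+5*d)
  have h4 := sq_nonneg (2*a+c+5*e)
  have h5 := sq_nonneg (a+2*b+c+5*f)
  obtain ⟨ha1, ha2⟩ := paper_sq_le a (by linarith)
  obtain ⟨hb1, hb2⟩ := paper_sq_le b (by linarith)
  obtain ⟨hc1, hc2⟩ := paper_sq_le c (by linarith)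
  obtain ⟨hd1, hd2⟩ := paper_sq_le (a+b+5*d) (by linarith)
  obtain ⟨he1, he2⟩ := paper_sq_le (2*a+c+5*e) (by linarith)
  obtain ⟨hf1, hf2⟩ := paper_sq_le (a+2*b+c+5*f) (by linarith)
  have hd : d = 0 := by omega
  have he : e = 0 := by omega
  have hf : -1 ≤ f ∧ f ≤ 1 := by omega
  subst hd he
  obtain ⟨hf1', hf2'⟩ := hf
  interval_cases a <;> interval_cases b <;> interval_cases c <;> interval_cases f <;> omega

lemma paper_sum_eq (z : Fin 6 → ℤ) : (∑ i, (paperA1.mulVec z) i ^ 2) =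
    (z 0)^2+(z 1)^2+(z 2)^2+(z 0+z 1+5*z 3)^2+(2*z 0+z 2+5*z 4)^2+(z 0+2*z 1+z 2+5*z 5)^2 := by
  rw [paper_mulVec_eq, Fin.sum_univ_six]
  obtain ⟨e0, e1, e2, e3, e4, e5⟩ := paper_vec6 (z 0) (z 1) (z 2)
    (z 0+z 1+5*z 3) (2*z 0+z 2+5*z 4) (z 0+2*z 1+z 2+5*z 5)
  rw [e0, e1, e2, e3, e4, e5]

lemma paper_main : ∀ v ∈ paperL1, (∑ i, (v i) ^ 2) ≤ 3 →
    v = 0 ∨ v = ![0,0,1,0,1,1] ∨ v = -![0,0,1,0,1,1] := by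
  rintro v ⟨z, rfl⟩ h
  rw [paper_sum_eq] at h
  rcases paper_key (z 0) (z 1) (z 2) (z 3) (z 4) (z 5) h with
    ⟨h0,h1,h2,h3,h4,h5⟩ | ⟨h0,h1,h2,h3,h4,h5⟩ | ⟨h0,h1,h2,h3,h4,h5⟩
  · left
    rw [paper_mulVec_eq, h0, h1, h2, h3, h4, h5]
    decide
  · right; left
    rw [paper_mulVec_eq, h0, h1, h2, h3, h4, h5]
    decide
  · right; right
    rw [paper_mulVec_eq, h0, h1, h2, h3, h4, h5]
    decide

/-- every nonzero `v ∈ L₁` has `‖v‖² ≥ 3`, and the only `v ∈ L₁` with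
`‖v‖² = 3` are `±(0,0,1,0,1,1)`. -/
theorem stmt_13 :
    (∀ v ∈ paperL1, v ≠ 0 → 3 ≤ ∑ i, (v i) ^ 2) ∧
    {v ∈ paperL1 | (∑ i, (v i) ^ 2) = 3} =
      {![0,0,1,0,1,1], -![0,0,1,0,1,1]} := by
  constructor
  · intro v hv hne
    by_contra hlt
    push_neg at hlt
    rcases paper_main v hv (by linarith) with rfl | rfl | rfl
    · exact hne rfl
    · simp [Fin.sum_univ_six, show (![(0:ℤ),0,1,0,1,1]) 5 = 1 from rfl] at hlt
    · simp [Fin.sum_univ_six, show (![(0:ℤ),0,1,0,1,1]) 5 = 1 from rfl] at hlt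
  · ext v
    simp only [Set.mem_setOf_eq, Set.mem_insert_iff, Set.mem_singleton_iff]
    constructor
    · rintro ⟨hv, h3⟩
      rcases paper_main v hv (le_of_eq h3) with rfl | rfl | rfl
      · rw [Fin.sum_univ_six] at h3; norm_num at h3
      · left; rfl
      · right; rfl
    · rintro (rfl | rfl)
      · refine ⟨⟨![0,0,1,0,0,0], ?_⟩, ?_⟩
        · rw [paper_mulVec_eq]; decide
        · simp [Fin.sum_univ_six, show (![(0:ℤ),0,1,0,1,1]) 5 = 1 from rfl]
      · refine ⟨⟨![0,0,-1,0,0,0], ?_⟩, ?_⟩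
        · rw [paper_mulVec_eq]; decide
        · simp [Fin.sum_univ_six, show (![(0:ℤ),0,1,0,1,1]) 5 = 1 from rfl]
end

section
/- Let A₁ be the 6×6 integer matrix with rows [[1,0,0,0,0,0],[0,1,0,0,0,0],[0,0,1,0,0,0],[1,1,0,5,0,0],[2,0,1,0,5,0],[1,2,1,0,0,5]] and L₁ = A₁ℤ⁶. Then the nonzero vectors v ∈ L₁ with ‖v‖² ≤ 5 are exactly ±(0,0,1,0,1,1) (with ‖v‖² = 3), ±(1,0,−1,1,1,0) (with ‖v‖² = 4), and ±(0,1,−1,1,−1,1) (with ‖v‖² = 5). -/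
/-!
A vector with `‖v‖² ≤ 5` has all coordinates in `[-2, 2]`. Reading off `A₁`, the lattice `L₁`
consists of the `v` with `v₃ ≡ v₀ + v₁`, `v₄ ≡ 2v₀ + v₂` and `v₅ ≡ v₀ + 2v₁ + v₂ (mod 5)`, and
`[-2, 2]` is a complete set of residues mod 5. So a point of `L₁ ∩ [-2, 2]⁶` is determined by its
first three coordinates, and only `5³ = 125` candidates remain to be checked.
-/

open Finset

theorem Int.eq_bmod_of_modEq {x y : ℤ} {m : ℕ} (h : x ≡ y [ZMOD m])
    (hx₁ : -((m : ℤ) / 2) ≤ x) (hx₂ : x < ((m : ℤ) + 1) / 2) : x = y.bmod m := by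
  rw [← Int.bmod_eq_of_le hx₁ hx₂, Int.bmod_def, Int.bmod_def, h]

theorem abs_le_two_of_sum_sq_le_five {ι : Type*} [Fintype ι] {v : ι → ℤ}
    (h : ∑ i, v i ^ 2 ≤ 5) (i : ι) : |v i| ≤ 2 := by
  have hsq : v i ^ 2 < 3 ^ 2 :=
    calc v i ^ 2 ≤ ∑ j, v j ^ 2 := single_le_sum (fun j _ => sq_nonneg (v j)) (mem_univ i)
      _ < 3 ^ 2 := by linarith
  have := abs_lt_of_sq_lt_sq hsq (by norm_num)
  omega

theorem paperA1_mulVec (z : Fin 6 → ℤ) :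
    paperA1.mulVec z = ![z 0, z 1, z 2, z 0 + z 1 + 5 * z 3, 2 * z 0 + z 2 + 5 * z 4,
      z 0 + 2 * z 1 + z 2 + 5 * z 5] := by
  ext i
  fin_cases i <;> simp [paperA1, Matrix.mulVec, dotProduct, Fin.sum_univ_six]

theorem mem_paperL1_iff {v : Fin 6 → ℤ} :
    v ∈ paperL1 ↔ v 3 ≡ v 0 + v 1 [ZMOD 5] ∧ v 4 ≡ 2 * v 0 + v 2 [ZMOD 5] ∧
      v 5 ≡ v 0 + 2 * v 1 + v 2 [ZMOD 5] := by
  simp only [Int.modEq_iff_dvd]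
  constructor
  · rintro ⟨z, rfl⟩
    simp only [paperA1_mulVec]
    exact ⟨⟨-z 3, by simp⟩, ⟨-z 4, by simp⟩, ⟨-z 5, by simp⟩⟩
  · rintro ⟨⟨a, ha⟩, ⟨b, hb⟩, ⟨c, hc⟩⟩
    refine ⟨![v 0, v 1, v 2, -a, -b, -c], ?_⟩
    rw [paperA1_mulVec]
    ext i
    fin_cases i <;> simp <;> omega

/-- The unique point of `L₁ ∩ [-2, 2]⁶` whose first three coordinates are `a, b, c`. -/
def liftL1 (a b c : ℤ) : Fin 6 → ℤ :=
  ![a, b, c, (a + b).bmod 5, (2 * a + c).bmod 5, (a + 2 * b + c).bmod 5]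

theorem eq_liftL1_of_mem_paperL1 {v : Fin 6 → ℤ} (hv : v ∈ paperL1) (hbox : ∀ i, |v i| ≤ 2) :
    v = liftL1 (v 0) (v 1) (v 2) := by
  obtain ⟨h3, h4, h5⟩ := mem_paperL1_iff.mp hv
  have reduce {i : Fin 6} {y : ℤ} (h : v i ≡ y [ZMOD 5]) : v i = y.bmod 5 := by
    have := abs_le.mp (hbox i)
    exact Int.eq_bmod_of_modEq (m := 5) h (by omega) (by omega)
  ext i
  fin_cases i
  exacts [rfl, rfl, rfl, reduce h3, reduce h4, reduce h5]

theorem liftL1_mem_of_sum_sq_le_five :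
    ∀ a ∈ Icc (-2 : ℤ) 2, ∀ b ∈ Icc (-2 : ℤ) 2, ∀ c ∈ Icc (-2 : ℤ) 2,
      liftL1 a b c ≠ 0 → ∑ i, liftL1 a b c i ^ 2 ≤ 5 →
        liftL1 a b c ∈ ({![0,0,1,0,1,1], -![0,0,1,0,1,1], ![1,0,-1,1,1,0], -![1,0,-1,1,1,0],
          ![0,1,-1,1,-1,1], -![0,1,-1,1,-1,1]} : Finset (Fin 6 → ℤ)) := by
  decide

/-- the nonzero vectors `v ∈ L₁` with `‖v‖² ≤ 5` are exactly
`±(0,0,1,0,1,1)` (with `‖v‖² = 3`), `±(1,0,-1,1,1,0)` (with `‖v‖² = 4`), and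
`±(0,1,-1,1,-1,1)` (with `‖v‖² = 5`). -/
theorem stmt_14 :
    {v ∈ paperL1 | v ≠ 0 ∧ (∑ i, (v i) ^ 2) ≤ 5} =
      {![0,0,1,0,1,1], -![0,0,1,0,1,1], ![1,0,-1,1,1,0], -![1,0,-1,1,1,0],
        ![0,1,-1,1,-1,1], -![0,1,-1,1,-1,1]} ∧
    (∑ i, (![0,0,1,0,1,1] : Fin 6 → ℤ) i ^ 2) = 3 ∧
    (∑ i, (![1,0,-1,1,1,0] : Fin 6 → ℤ) i ^ 2) = 4 ∧
    (∑ i, (![0,1,-1,1,-1,1] : Fin 6 → ℤ) i ^ 2) = 5 := by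
  refine ⟨?_, by decide, by decide, by decide⟩
  ext v
  constructor
  · rintro ⟨hv, hne, hsum⟩
    have hbox := abs_le_two_of_sum_sq_le_five hsum
    have hIcc (i : Fin 6) : v i ∈ Icc (-2 : ℤ) 2 := mem_Icc.mpr (abs_le.mp (hbox i))
    rw [eq_liftL1_of_mem_paperL1 hv hbox] at hne hsum ⊢
    simpa using liftL1_mem_of_sum_sq_le_five _ (hIcc 0) _ (hIcc 1) _ (hIcc 2) hne hsum
  · rintro (rfl | rfl | rfl | rfl | rfl | rfl) <;>
      exact ⟨mem_paperL1_iff.mpr (by decide), by decide, by decide⟩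
end

section
/- Say that dimension n admits a choir of size k if there exist k full-rank lattices in ℝⁿ that are mutually isospectral and pairwise incongruent. If dimension m admits a choir of size k and dimension n admits a choir of size l, then dimension m + n admits a choir of size k·l; i.e. the choir numbers satisfy ♭_{m+n} ≥ ♭_m · ♭_n for all m, n ≥ 1. -/
open Matrix

/-- A full-rank lattice in `ℝⁿ`: a set of the form `Mℤⁿ` for an invertible real matrix. -/
def IsLattice {n : ℕ} (Γ : Set (Fin n → ℝ)) : Prop :=
  ∃ M : Matrix (Fin n) (Fin n) ℝ, M.det ≠ 0 ∧
    Γ = {v | ∃ z : Fin n → ℤ, v = M.mulVec fun i => ((z i : ℝ))}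

/-- Two lattices are isospectral if for every real `t` the sets of vectors of squared
Euclidean norm `t` are finite and have the same cardinality. -/
def Isospectral {n : ℕ} (Γ₁ Γ₂ : Set (Fin n → ℝ)) : Prop :=
  ∀ t : ℝ,
    {v ∈ Γ₁ | (∑ i, (v i) ^ 2) = t}.Finite ∧
    {v ∈ Γ₂ | (∑ i, (v i) ^ 2) = t}.Finite ∧
    {v ∈ Γ₁ | (∑ i, (v i) ^ 2) = t}.ncard = {v ∈ Γ₂ | (∑ i, (v i) ^ 2) = t}.ncard

/-- Two lattices are congruent if an orthogonal matrix maps one onto the other. -/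
def LatticeCongruent {n : ℕ} (Γ₁ Γ₂ : Set (Fin n → ℝ)) : Prop :=
  ∃ C : Matrix (Fin n) (Fin n) ℝ, Cᵀ * C = 1 ∧ (fun v => C.mulVec v) '' Γ₁ = Γ₂

/-- Dimension `n` admits a choir of size `k` if there exist `k` mutually isospectral,
pairwise incongruent full-rank lattices in `ℝⁿ`. -/
def AdmitsChoir (n k : ℕ) : Prop :=
  ∃ Γ : Fin k → Set (Fin n → ℝ),
    (∀ i, IsLattice (Γ i)) ∧
    (∀ i j, Isospectral (Γ i) (Γ j)) ∧
    (∀ i j, i ≠ j → ¬ LatticeCongruent (Γ i) (Γ j))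

/-!
Given choirs `Γᵢ` in `ℝᵐ` and `Δⱼ` in `ℝⁿ`, take the orthogonal sums `Γᵢ ⊕ √r • Δⱼ`. Norm-preserving
bijections between the factors add up to one between the sums, so the sums are isospectral.
For all but countably many `r > 0`, a vector of `Γᵢ ⊕ √r • Δⱼ` whose squared norm is that of a
vector of some `Γ_{i'}` lies in `Γᵢ ⊕ 0`, and one whose squared norm is `r` times that of a vector
of some `Δ_{j'}` lies in `0 ⊕ √r • Δⱼ`. An orthogonal map between two sums must therefore respect
both summands, so it is block diagonal and its blocks are congruences of the factors.
-/

open Matrix Set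
open scoped Pointwise

variable {m n d : ℕ}

lemma Fin.append_inj {α : Type*} {u u' : Fin m → α} {v v' : Fin n → α} :
    Fin.append u v = Fin.append u' v' ↔ u = u' ∧ v = v' := by
  refine ⟨fun h => ⟨funext fun i => ?_, funext fun j => ?_⟩, fun h => h.1 ▸ h.2 ▸ rfl⟩
  · simpa using congrFun h (Fin.castAdd n i)
  · simpa using congrFun h (Fin.natAdd m j)

lemma Fin.append_left_injective {α : Type*} (v : Fin n → α) :
    Function.Injective fun u : Fin m → α => Fin.append u v :=
  fun _ _ h => (Fin.append_inj.1 h).1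

lemma Fin.append_right_injective {α : Type*} (u : Fin m → α) :
    Function.Injective fun v : Fin n → α => Fin.append u v :=
  fun _ _ h => (Fin.append_inj.1 h).2

lemma Fin.map_append {α β : Type*} (f : α → β) (u : Fin m → α) (v : Fin n → α) :
    (fun i => f (Fin.append u v i)) = Fin.append (fun i => f (u i)) (fun j => f (v j)) := by
  funext i
  induction i using Fin.addCases <;> simp

def sqNorm (v : Fin d → ℝ) : ℝ := ∑ i, v i ^ 2

lemma sqNorm_eq_dotProduct (v : Fin d → ℝ) : sqNorm v = v ⬝ᵥ v := by
  simp [sqNorm, dotProduct, sq]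

@[simp] lemma sqNorm_zero : sqNorm (0 : Fin d → ℝ) = 0 := by
  simp [sqNorm]

lemma sqNorm_eq_zero {v : Fin d → ℝ} : sqNorm v = 0 ↔ v = 0 := by
  simp [sqNorm_eq_dotProduct, dotProduct_self_eq_zero]

lemma sqNorm_smul (c : ℝ) (v : Fin d → ℝ) : sqNorm (c • v) = c ^ 2 * sqNorm v := by
  simp [sqNorm, mul_pow, Finset.mul_sum]

lemma sqNorm_append (u : Fin m → ℝ) (v : Fin n → ℝ) :
    sqNorm (Fin.append u v) = sqNorm u + sqNorm v := by
  simp [sqNorm, Fin.sum_univ_add]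

lemma sqNorm_mulVec {C : Matrix (Fin d) (Fin d) ℝ} (hC : Cᵀ * C = 1) (v : Fin d → ℝ) :
    sqNorm (C *ᵥ v) = sqNorm v := by
  rw [sqNorm_eq_dotProduct, sqNorm_eq_dotProduct, dotProduct_mulVec, ← mulVec_transpose,
    mulVec_mulVec, hC, one_mulVec]

lemma abs_le_sqrt_sqNorm (v : Fin d → ℝ) (i : Fin d) : |v i| ≤ √(sqNorm v) :=
  Real.abs_le_sqrt <| Finset.single_le_sum (f := fun j => v j ^ 2)
    (fun j _ => sq_nonneg (v j)) (Finset.mem_univ i)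

lemma isospectral_iff {Γ₁ Γ₂ : Set (Fin d → ℝ)} :
    Isospectral Γ₁ Γ₂ ↔ ∀ t, {v ∈ Γ₁ | sqNorm v = t}.Finite ∧ {v ∈ Γ₂ | sqNorm v = t}.Finite ∧
      {v ∈ Γ₁ | sqNorm v = t}.ncard = {v ∈ Γ₂ | sqNorm v = t}.ncard :=
  Iff.rfl

lemma Isospectral.exists_bijOn {Γ₁ Γ₂ : Set (Fin d → ℝ)} (h : Isospectral Γ₁ Γ₂) :
    ∃ g, BijOn g Γ₁ Γ₂ ∧ ∀ v ∈ Γ₁, sqNorm (g v) = sqNorm v := by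
  have hlevel (t : ℝ) : ∃ g, BijOn g {v ∈ Γ₁ | sqNorm v = t} {v ∈ Γ₂ | sqNorm v = t} := by
    obtain ⟨h₁, h₂, hcard⟩ := isospectral_iff.1 h t
    exact h₁.exists_bijOn_of_encard_eq (by rw [← h₁.cast_ncard_eq, ← h₂.cast_ncard_eq, hcard])
  choose g hg using hlevel
  have hg_sqNorm {v} (hv : v ∈ Γ₁) : sqNorm (g (sqNorm v) v) = sqNorm v :=
    ((hg _).mapsTo ⟨hv, rfl⟩).2
  refine ⟨fun v => g (sqNorm v) v, ⟨fun v hv => ((hg _).mapsTo ⟨hv, rfl⟩).1, ?_, ?_⟩,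
    fun v hv => hg_sqNorm hv⟩
  · intro v hv w hw hvw
    have hvw' : sqNorm v = sqNorm w := by
      rw [← hg_sqNorm hv, ← hg_sqNorm hw]
      exact congrArg sqNorm hvw
    exact (hg (sqNorm v)).injOn ⟨hv, rfl⟩ ⟨hw, hvw'.symm⟩ (by simpa only [hvw'] using hvw)
  · intro w hw
    obtain ⟨v, hv, hvw⟩ := (hg (sqNorm w)).surjOn ⟨hw, rfl⟩
    exact ⟨v, hv.1, by simpa only [hv.2] using hvw⟩

lemma Isospectral.of_bijOn {Γ₁ Γ₂ : Set (Fin d → ℝ)}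
    (h₁ : ∀ t, {v ∈ Γ₁ | sqNorm v = t}.Finite) (h₂ : ∀ t, {v ∈ Γ₂ | sqNorm v = t}.Finite)
    {g : (Fin d → ℝ) → Fin d → ℝ} (hg : BijOn g Γ₁ Γ₂)
    (hg_sqNorm : ∀ v ∈ Γ₁, sqNorm (g v) = sqNorm v) : Isospectral Γ₁ Γ₂ := by
  refine isospectral_iff.2 fun t =>
    ⟨h₁ t, h₂ t, BijOn.ncard_eq ⟨?_, hg.injOn.mono (sep_subset _ _), ?_⟩⟩
  · rintro v ⟨hv, rfl⟩
    exact ⟨hg.mapsTo hv, hg_sqNorm v hv⟩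
  · rintro w ⟨hw, rfl⟩
    obtain ⟨v, hv, rfl⟩ := hg.surjOn hw
    exact ⟨v, ⟨hv, (hg_sqNorm v hv).symm⟩, rfl⟩

lemma Isospectral.smul {Δ₁ Δ₂ : Set (Fin d → ℝ)} (h : Isospectral Δ₁ Δ₂) {c : ℝ} (hc : c ≠ 0) :
    Isospectral (c • Δ₁) (c • Δ₂) := by
  have hlevel (Δ : Set (Fin d → ℝ)) (t : ℝ) :
      {w ∈ c • Δ | sqNorm w = t} = (c • ·) '' {v ∈ Δ | sqNorm v = t / c ^ 2} := by
    ext w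
    constructor
    · rintro ⟨⟨v, hv, rfl⟩, rfl⟩
      exact ⟨v, ⟨hv, by rw [sqNorm_smul]; field_simp⟩, rfl⟩
    · rintro ⟨v, ⟨hv, hvt⟩, rfl⟩
      exact ⟨⟨v, hv, rfl⟩, by rw [sqNorm_smul, hvt]; field_simp⟩
  refine isospectral_iff.2 fun t => ?_
  obtain ⟨h₁, h₂, hcard⟩ := isospectral_iff.1 h (t / c ^ 2)
  rw [hlevel, hlevel]
  exact ⟨h₁.image _, h₂.image _, by
    rw [ncard_image_of_injective _ (smul_right_injective _ hc),
      ncard_image_of_injective _ (smul_right_injective _ hc), hcard]⟩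

lemma Isospectral.image2_append {Γ₁ Γ₂ : Set (Fin m → ℝ)} {Δ₁ Δ₂ : Set (Fin n → ℝ)}
    (hΓ : Isospectral Γ₁ Γ₂) (hΔ : Isospectral Δ₁ Δ₂)
    (h₁ : ∀ t, {w ∈ image2 Fin.append Γ₁ Δ₁ | sqNorm w = t}.Finite)
    (h₂ : ∀ t, {w ∈ image2 Fin.append Γ₂ Δ₂ | sqNorm w = t}.Finite) :
    Isospectral (image2 Fin.append Γ₁ Δ₁) (image2 Fin.append Γ₂ Δ₂) := by
  obtain ⟨f, hf, hf_sqNorm⟩ := hΓ.exists_bijOn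
  obtain ⟨g, hg, hg_sqNorm⟩ := hΔ.exists_bijOn
  let F : (Fin (m + n) → ℝ) → Fin (m + n) → ℝ :=
    fun w => Fin.append (f fun i => w (Fin.castAdd n i)) (g fun j => w (Fin.natAdd m j))
  have hF (u v) : F (Fin.append u v) = Fin.append (f u) (g v) := by simp [F]
  refine Isospectral.of_bijOn h₁ h₂ (g := F) ⟨?_, ?_, ?_⟩ ?_
  · rintro _ ⟨u, hu, v, hv, rfl⟩
    exact hF u v ▸ mem_image2_of_mem (hf.mapsTo hu) (hg.mapsTo hv)
  · rintro _ ⟨u, hu, v, hv, rfl⟩ _ ⟨u', hu', v', hv', rfl⟩ huv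
    rw [hF, hF, Fin.append_inj] at huv
    rw [hf.injOn hu hu' huv.1, hg.injOn hv hv' huv.2]
  · rintro _ ⟨u', hu', v', hv', rfl⟩
    obtain ⟨u, hu, rfl⟩ := hf.surjOn hu'
    obtain ⟨v, hv, rfl⟩ := hg.surjOn hv'
    exact ⟨_, mem_image2_of_mem hu hv, hF u v⟩
  · rintro _ ⟨u, hu, v, hv, rfl⟩
    rw [hF, sqNorm_append, sqNorm_append, hf_sqNorm u hu, hg_sqNorm v hv]

section Blocks

variable {R : Type*}

def finAddBlocks (C : Matrix (Fin (m + n)) (Fin (m + n)) R) :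
    Matrix (Fin m ⊕ Fin n) (Fin m ⊕ Fin n) R :=
  C.submatrix finSumFinEquiv finSumFinEquiv

lemma mulVec_append [NonUnitalNonAssocSemiring R] (C : Matrix (Fin (m + n)) (Fin (m + n)) R)
    (x : Fin m → R) (y : Fin n → R) :
    C *ᵥ Fin.append x y =
      Fin.append ((finAddBlocks C).toBlocks₁₁ *ᵥ x + (finAddBlocks C).toBlocks₁₂ *ᵥ y)
        ((finAddBlocks C).toBlocks₂₁ *ᵥ x + (finAddBlocks C).toBlocks₂₂ *ᵥ y) := by
  funext i
  induction i using Fin.addCases <;>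
    simp [mulVec, dotProduct, Fin.sum_univ_add, finAddBlocks, toBlocks₁₁, toBlocks₁₂,
      toBlocks₂₁, toBlocks₂₂]

lemma finAddBlocks_transpose_mul_self [Semiring R]
    {C : Matrix (Fin (m + n)) (Fin (m + n)) R} (hC : Cᵀ * C = 1) :
    (finAddBlocks C)ᵀ * finAddBlocks C = 1 := by
  rw [finAddBlocks, transpose_submatrix, submatrix_mul_equiv, hC, submatrix_one_equiv]

variable {ι κ : Type*} [Fintype ι] [Fintype κ] [DecidableEq ι] [DecidableEq κ] [Semiring R]

lemma toBlocks₁₁_transpose_mul_self {B : Matrix (ι ⊕ κ) (ι ⊕ κ) R} (hB : Bᵀ * B = 1)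
    (h : B.toBlocks₂₁ = 0) : B.toBlocks₁₁ᵀ * B.toBlocks₁₁ = 1 := by
  rw [← fromBlocks_toBlocks B, fromBlocks_transpose, fromBlocks_multiply, ← fromBlocks_one,
    fromBlocks_inj, h] at hB
  simpa using hB.1

lemma toBlocks₂₂_transpose_mul_self {B : Matrix (ι ⊕ κ) (ι ⊕ κ) R} (hB : Bᵀ * B = 1)
    (h : B.toBlocks₁₂ = 0) : B.toBlocks₂₂ᵀ * B.toBlocks₂₂ = 1 := by
  rw [← fromBlocks_toBlocks B, fromBlocks_transpose, fromBlocks_multiply, ← fromBlocks_one,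
    fromBlocks_inj, h] at hB
  simpa using hB.2.2.2

end Blocks

namespace IsLattice

variable {Γ : Set (Fin d → ℝ)}

lemma zero_mem (hΓ : IsLattice Γ) : 0 ∈ Γ := by
  obtain ⟨M, -, rfl⟩ := hΓ
  exact ⟨0, by simp [← Pi.zero_def]⟩

lemma countable (hΓ : IsLattice Γ) : Γ.Countable := by
  obtain ⟨M, -, rfl⟩ := hΓ
  refine (countable_range fun z : Fin d → ℤ => M *ᵥ fun i => (z i : ℝ)).mono ?_
  rintro _ ⟨z, rfl⟩
  exact ⟨z, rfl⟩

lemma finite_sqNorm_le (hΓ : IsLattice Γ) (t : ℝ) : {v ∈ Γ | sqNorm v ≤ t}.Finite := by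
  obtain ⟨M, hM, rfl⟩ := hΓ
  have hball : {v : Fin d → ℝ | sqNorm v ≤ t} ⊆ Metric.closedBall 0 √t := fun v hv => by
    rw [mem_closedBall_zero_iff, pi_norm_le_iff_of_nonneg (Real.sqrt_nonneg t)]
    exact fun i => (abs_le_sqrt_sqNorm v i).trans (Real.sqrt_le_sqrt hv)
  obtain ⟨R, hR⟩ := isBounded_iff_forall_norm_le.1
    ((isCompact_closedBall (0 : Fin d → ℝ) √t).image (f := (M⁻¹ *ᵥ ·)) (by fun_prop)).isBounded
  -- integer vectors are recovered through `M⁻¹`, so their coordinates are bounded by `R`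
  have hbox (z : Fin d → ℤ) (hz : sqNorm (M *ᵥ fun i => (z i : ℝ)) ≤ t) :
      z ∈ Icc (-fun _ => ⌈R⌉) (fun _ => ⌈R⌉) := by
    have hnorm := hR (fun i => (z i : ℝ)) ⟨_, hball hz, show M⁻¹ *ᵥ M *ᵥ _ = _ by
      rw [mulVec_mulVec, nonsing_inv_mul M (isUnit_iff_ne_zero.2 hM), one_mulVec]⟩
    have hzi (i : Fin d) : |(z i : ℝ)| ≤ ⌈R⌉ :=
      ((norm_le_pi_norm _ i).trans hnorm).trans (Int.le_ceil R)
    exact ⟨fun i => by exact_mod_cast (abs_le.1 (hzi i)).1,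
      fun i => by exact_mod_cast (abs_le.1 (hzi i)).2⟩
  refine ((finite_Icc (-fun _ => ⌈R⌉) fun _ => ⌈R⌉).image
    fun z : Fin d → ℤ => M *ᵥ fun i => (z i : ℝ)).subset ?_
  rintro _ ⟨⟨z, rfl⟩, hz⟩
  exact ⟨z, hbox z hz, rfl⟩

lemma finite_sqNorm_eq (hΓ : IsLattice Γ) (t : ℝ) : {v ∈ Γ | sqNorm v = t}.Finite :=
  (hΓ.finite_sqNorm_le t).subset fun _ hv => ⟨hv.1, hv.2.le⟩

lemma smul (hΓ : IsLattice Γ) {c : ℝ} (hc : c ≠ 0) : IsLattice (c • Γ) := by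
  obtain ⟨M, hM, rfl⟩ := hΓ
  refine ⟨c • M, by simp [hc, hM], ?_⟩
  ext v
  simp only [mem_smul_set, smul_mulVec]
  constructor
  · rintro ⟨_, ⟨z, rfl⟩, rfl⟩
    exact ⟨z, rfl⟩
  · rintro ⟨z, rfl⟩
    exact ⟨_, ⟨z, rfl⟩, rfl⟩

lemma image2_append {Γ : Set (Fin m → ℝ)} {Δ : Set (Fin n → ℝ)} (hΓ : IsLattice Γ)
    (hΔ : IsLattice Δ) : IsLattice (image2 Fin.append Γ Δ) := by
  obtain ⟨M, hM, rfl⟩ := hΓ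
  obtain ⟨N, hN, rfl⟩ := hΔ
  let C := (fromBlocks M 0 0 N).submatrix finSumFinEquiv.symm finSumFinEquiv.symm
  have hC : finAddBlocks C = fromBlocks M 0 0 N := by simp [C, finAddBlocks]
  have hC_append (x : Fin m → ℝ) (y : Fin n → ℝ) :
      C *ᵥ Fin.append x y = Fin.append (M *ᵥ x) (N *ᵥ y) := by
    simp [mulVec_append, hC]
  refine ⟨C, by simp [C, det_fromBlocks_zero₂₁, hM, hN], ?_⟩
  ext w
  constructor
  · rintro ⟨_, ⟨x, rfl⟩, _, ⟨y, rfl⟩, rfl⟩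
    exact ⟨Fin.append x y, by rw [Fin.map_append, hC_append]⟩
  · rintro ⟨z, rfl⟩
    refine ⟨_, ⟨fun i => z (Fin.castAdd n i), rfl⟩, _, ⟨fun j => z (Fin.natAdd m j), rfl⟩, ?_⟩
    rw [← hC_append, ← Fin.map_append, Fin.append_castAdd_natAdd]

lemma eq_zero_of_forall_mulVec_eq_zero (hΓ : IsLattice Γ) {ι : Type*}
    {X : Matrix ι (Fin d) ℝ} (hX : ∀ v ∈ Γ, X *ᵥ v = 0) : X = 0 := by
  obtain ⟨M, hM, rfl⟩ := hΓ
  have hXM : X * M = 0 := by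
    ext i j
    have hcast : (fun k => ((Pi.single j 1 : Fin d → ℤ) k : ℝ)) = Pi.single j 1 := by
      ext k
      simp [Pi.single_apply, apply_ite]
    have := hX _ ⟨Pi.single j 1, rfl⟩
    rw [hcast, mulVec_mulVec, mulVec_single_one] at this
    exact congrFun this i
  calc X = X * M * M⁻¹ := by
        rw [Matrix.mul_assoc, mul_nonsing_inv M (isUnit_iff_ne_zero.2 hM), Matrix.mul_one]
    _ = 0 := by rw [hXM, Matrix.zero_mul]

end IsLattice

def IsSumSeparated (A B : Set ℝ) : Prop :=
  ∀ a ∈ A, ∀ b ∈ B, (a + b ∈ A → b = 0) ∧ (a + b ∈ B → a = 0)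

lemma exists_pos_isSumSeparated_smul {A B : Set ℝ} (hA : A.Countable) (hB : B.Countable) :
    ∃ r : ℝ, 0 < r ∧ IsSumSeparated A (r • B) := by
  -- separation fails only for `r = (a' - a) / b` or `r = a / (b' - b)`
  let bad : Set ℝ := (fun p : ℝ × ℝ × ℝ => (p.2.1 - p.1) / p.2.2) '' (A ×ˢ A ×ˢ B) ∪
    (fun p : ℝ × ℝ × ℝ => p.1 / (p.2.1 - p.2.2)) '' (A ×ˢ B ×ˢ B)
  have hbad : bad.Countable :=
    ((hA.prod (hA.prod hB)).image _).union ((hA.prod (hB.prod hB)).image _)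
  obtain ⟨r, hr_bad, hr⟩ :=
    (hbad.dense_compl ℝ).exists_mem_open isOpen_Ioi (nonempty_Ioi (a := (0 : ℝ)))
  refine ⟨r, hr, ?_⟩
  rintro a ha _ ⟨b, hb, rfl⟩
  simp only [smul_eq_mul]
  refine ⟨fun h => ?_, fun h => ?_⟩
  · by_contra hrb
    have hb0 : b ≠ 0 := by rintro rfl; simp at hrb
    exact hr_bad (Or.inl ⟨(a, a + r * b, b), ⟨ha, h, hb⟩, by field_simp; ring⟩)
  · obtain ⟨b', hb', h⟩ := h
    replace h : r * b' = a + r * b := h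
    by_contra ha0
    have hbb : b' - b ≠ 0 := fun hbb => ha0 (by rw [sub_eq_zero.1 hbb] at h; linarith)
    exact hr_bad (Or.inr ⟨(a, b', b), ⟨ha, hb', hb⟩, by
      field_simp
      linarith⟩)

section Separation

variable {Γ : Set (Fin m → ℝ)} {Δ : Set (Fin n → ℝ)} {A B : Set ℝ}

lemma image2_append_inter_preimage_left (hsep : IsSumSeparated A B) (hΓA : MapsTo sqNorm Γ A)
    (hΔB : MapsTo sqNorm Δ B) (hΔ : 0 ∈ Δ) :
    image2 Fin.append Γ Δ ∩ sqNorm ⁻¹' A = (Fin.append · 0) '' Γ := by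
  ext w
  constructor
  · rintro ⟨⟨u, hu, v, hv, rfl⟩, hw⟩
    rw [mem_preimage, sqNorm_append] at hw
    obtain rfl := sqNorm_eq_zero.1 ((hsep _ (hΓA hu) _ (hΔB hv)).1 hw)
    exact ⟨u, hu, rfl⟩
  · rintro ⟨u, hu, rfl⟩
    exact ⟨mem_image2_of_mem hu hΔ, by simpa [sqNorm_append] using hΓA hu⟩

lemma image2_append_inter_preimage_right (hsep : IsSumSeparated A B) (hΓA : MapsTo sqNorm Γ A)
    (hΔB : MapsTo sqNorm Δ B) (hΓ : 0 ∈ Γ) :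
    image2 Fin.append Γ Δ ∩ sqNorm ⁻¹' B = Fin.append 0 '' Δ := by
  ext w
  constructor
  · rintro ⟨⟨u, hu, v, hv, rfl⟩, hw⟩
    rw [mem_preimage, sqNorm_append] at hw
    obtain rfl := sqNorm_eq_zero.1 ((hsep _ (hΓA hu) _ (hΔB hv)).2 hw)
    exact ⟨v, hv, rfl⟩
  · rintro ⟨v, hv, rfl⟩
    exact ⟨mem_image2_of_mem hΓ hv, by simpa [sqNorm_append] using hΔB hv⟩

end Separation

section Descent

variable {C : Matrix (Fin (m + n)) (Fin (m + n)) ℝ}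

lemma blocks_of_mulVec_image_append_zero {Γ₁ Γ₂ : Set (Fin m → ℝ)} (hΓ₁ : IsLattice Γ₁)
    (h : (C *ᵥ ·) '' ((Fin.append · (0 : Fin n → ℝ)) '' Γ₁) = (Fin.append · 0) '' Γ₂) :
    (finAddBlocks C).toBlocks₂₁ = 0 ∧ ((finAddBlocks C).toBlocks₁₁ *ᵥ ·) '' Γ₁ = Γ₂ := by
  simp only [image_image, mulVec_append, mulVec_zero, add_zero] at h
  have h₂₁ : (finAddBlocks C).toBlocks₂₁ = 0 :=
    hΓ₁.eq_zero_of_forall_mulVec_eq_zero fun u hu => by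
      obtain ⟨_, -, hu'⟩ := h.subset (mem_image_of_mem _ hu)
      exact (Fin.append_inj.1 hu').2.symm
  simp only [h₂₁, zero_mulVec] at h
  refine ⟨h₂₁, image_injective.2 (Fin.append_left_injective (0 : Fin n → ℝ)) ?_⟩
  rwa [image_image]

lemma blocks_of_mulVec_image_zero_append {Δ₁ Δ₂ : Set (Fin n → ℝ)} (hΔ₁ : IsLattice Δ₁)
    (h : (C *ᵥ ·) '' (Fin.append (0 : Fin m → ℝ) '' Δ₁) = Fin.append 0 '' Δ₂) :
    (finAddBlocks C).toBlocks₁₂ = 0 ∧ ((finAddBlocks C).toBlocks₂₂ *ᵥ ·) '' Δ₁ = Δ₂ := by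
  simp only [image_image, mulVec_append, mulVec_zero, zero_add] at h
  have h₁₂ : (finAddBlocks C).toBlocks₁₂ = 0 :=
    hΔ₁.eq_zero_of_forall_mulVec_eq_zero fun v hv => by
      obtain ⟨_, -, hv'⟩ := h.subset (mem_image_of_mem _ hv)
      exact (Fin.append_inj.1 hv').1.symm
  simp only [h₁₂, zero_mulVec] at h
  refine ⟨h₁₂, image_injective.2 (Fin.append_right_injective (0 : Fin m → ℝ)) ?_⟩
  rwa [image_image]

end Descent

lemma LatticeCongruent.of_image2_append {Γ₁ Γ₂ : Set (Fin m → ℝ)} {Δ₁ Δ₂ : Set (Fin n → ℝ)}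
    (hΓ₁ : IsLattice Γ₁) (hΓ₂ : IsLattice Γ₂) (hΔ₁ : IsLattice Δ₁) (hΔ₂ : IsLattice Δ₂)
    {A B : Set ℝ} (hsep : IsSumSeparated A B) (hΓ₁A : MapsTo sqNorm Γ₁ A)
    (hΓ₂A : MapsTo sqNorm Γ₂ A) (hΔ₁B : MapsTo sqNorm Δ₁ B) (hΔ₂B : MapsTo sqNorm Δ₂ B)
    (h : LatticeCongruent (image2 Fin.append Γ₁ Δ₁) (image2 Fin.append Γ₂ Δ₂)) :
    LatticeCongruent Γ₁ Γ₂ ∧ LatticeCongruent Δ₁ Δ₂ := by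
  obtain ⟨C, hC, hCΓ⟩ := h
  have hlevel (S : Set ℝ) : (C *ᵥ ·) '' (image2 Fin.append Γ₁ Δ₁ ∩ sqNorm ⁻¹' S) =
      image2 Fin.append Γ₂ Δ₂ ∩ sqNorm ⁻¹' S := by
    have hpre : (C *ᵥ ·) ⁻¹' (sqNorm ⁻¹' S) = sqNorm ⁻¹' S := by
      ext v
      simp [sqNorm_mulVec hC]
    rw [← hCΓ, ← image_inter_preimage, hpre]
  have hA := hlevel A
  have hB := hlevel B
  rw [image2_append_inter_preimage_left hsep hΓ₁A hΔ₁B hΔ₁.zero_mem,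
    image2_append_inter_preimage_left hsep hΓ₂A hΔ₂B hΔ₂.zero_mem] at hA
  rw [image2_append_inter_preimage_right hsep hΓ₁A hΔ₁B hΓ₁.zero_mem,
    image2_append_inter_preimage_right hsep hΓ₂A hΔ₂B hΓ₂.zero_mem] at hB
  obtain ⟨h₂₁, hΓ⟩ := blocks_of_mulVec_image_append_zero hΓ₁ hA
  obtain ⟨h₁₂, hΔ⟩ := blocks_of_mulVec_image_zero_append hΔ₁ hB
  have hC' := finAddBlocks_transpose_mul_self hC
  exact ⟨⟨_, toBlocks₁₁_transpose_mul_self hC' h₂₁, hΓ⟩,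
    ⟨_, toBlocks₂₂_transpose_mul_self hC' h₁₂, hΔ⟩⟩

lemma LatticeCongruent.of_smul {Γ₁ Γ₂ : Set (Fin d → ℝ)} {c : ℝ} (hc : c ≠ 0)
    (h : LatticeCongruent (c • Γ₁) (c • Γ₂)) : LatticeCongruent Γ₁ Γ₂ := by
  obtain ⟨C, hC, hCΓ⟩ := h
  refine ⟨C, hC, ?_⟩
  rw [image_smul_comm _ _ _ fun v => mulVec_smul C c v] at hCΓ
  rw [← inv_smul_smul₀ hc ((C *ᵥ ·) '' Γ₁), hCΓ, inv_smul_smul₀ hc]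

theorem stmt_17_general (m n k l : ℕ) (h₁ : AdmitsChoir m k) (h₂ : AdmitsChoir n l) :
    AdmitsChoir (m + n) (k * l) := by
  obtain ⟨Γ, hΓ, hΓ_iso, hΓ_ne⟩ := h₁
  obtain ⟨Δ, hΔ, hΔ_iso, hΔ_ne⟩ := h₂
  obtain ⟨r, hr, hsep⟩ := exists_pos_isSumSeparated_smul
    (countable_iUnion fun i => (hΓ i).countable.image sqNorm)
    (countable_iUnion fun j => (hΔ j).countable.image sqNorm)
  have hc : √r ≠ 0 := (Real.sqrt_pos.2 hr).ne'
  have hΓA (i : Fin k) : MapsTo sqNorm (Γ i) (⋃ i, sqNorm '' Γ i) :=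
    fun u hu => mem_iUnion.2 ⟨i, u, hu, rfl⟩
  have hΔB (j : Fin l) : MapsTo sqNorm (√r • Δ j) (r • ⋃ j, sqNorm '' Δ j) := by
    rintro _ ⟨v, hv, rfl⟩
    exact ⟨sqNorm v, mem_iUnion.2 ⟨j, v, hv, rfl⟩, by simp [sqNorm_smul, Real.sq_sqrt hr.le]⟩
  let L (p : Fin k × Fin l) := image2 Fin.append (Γ p.1) (√r • Δ p.2)
  have hL (p : Fin k × Fin l) : IsLattice (L p) := (hΓ p.1).image2_append ((hΔ p.2).smul hc)
  refine ⟨fun p => L (finProdFinEquiv.symm p), fun p => hL _, fun p q => ?_, fun p q hpq h => ?_⟩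
  · exact (hΓ_iso _ _).image2_append ((hΔ_iso _ _).smul hc) (hL _).finite_sqNorm_eq
      (hL _).finite_sqNorm_eq
  obtain ⟨hΓ_cong, hΔ_cong⟩ := h.of_image2_append (hΓ _) (hΓ _) ((hΔ _).smul hc)
    ((hΔ _).smul hc) hsep (hΓA _) (hΓA _) (hΔB _) (hΔB _)
  by_cases hi : (finProdFinEquiv.symm p).1 = (finProdFinEquiv.symm q).1
  · refine hΔ_ne _ _ (fun hj => hpq ?_) (hΔ_cong.of_smul hc)
    exact finProdFinEquiv.symm.injective (Prod.ext hi hj)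
  · exact hΓ_ne _ _ hi hΓ_cong

/-- if dimension `m` admits a choir of size `k` and dimension `n` admits a
choir of size `l`, then dimension `m + n` admits a choir of size `k * l`; i.e. the choir
numbers are supermultiplicative. -/
theorem stmt_17 (m n k l : ℕ) (hm : 1 ≤ m) (hn : 1 ≤ n)
    (h₁ : AdmitsChoir m k) (h₂ : AdmitsChoir n l) :
    AdmitsChoir (m + n) (k * l) :=
  stmt_17_general m n k l h₁ h₂
end
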